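/- arXiv:2605.04214 — 10 statements merged into one kernel-verified Lean document; each statement's English description precedes it below -/
import Mathlib

section
/- Let G be a finite group which is a gpnf-group of type (p,q,n), where p and q are primes and n ≥ 2. Then for any three pairwise distinct primes r, s, t dividing |G|, if G contains an element of order r·s and an element of order s·t, then G also contains an element of order r·t; equivalently, every connected component of the Gruenberg–Kegel graph GK(G) is a clique. -/
lemma aux_not_prime_pow {G : Type*} [Group G] {x a : G} {p : ℕ} (hp : p.Prime)
    (hx : orderOf x = p) {u v : ℕ} (hu : u.Prime) (hv : v.Prime)
    (ha : orderOf a = u * v) (h : ∃ k : ℕ, IsConj (x ^ k) a) : False := by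
  obtain ⟨k, c, hc⟩ := h
  have h1 : orderOf a ∣ p := by
    rw [← hc.orderOf_eq, ← hx]
    exact orderOf_pow_dvd k
  rw [ha] at h1
  rcases (hp.eq_one_or_self_of_dvd _ h1) with h2 | h2
  · exact hu.one_lt.ne' (Nat.eq_one_of_mul_eq_one_right h2)
  · have hud : u ∣ p := ⟨v, h2.symm⟩
    rcases (hp.eq_one_or_self_of_dvd _ hud) with h3 | h3
    · exact hu.ne_one h3
    · have : v = 1 := by
        have := h2.symm.trans (by rw [h3])
        nlinarith [hu.pos, hv.pos, Nat.eq_of_mul_eq_mul_left hu.pos (by linarith [this] : u * v = u * 1)]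
      exact hv.ne_one this

/-- If a finite group `G` is a gpnf-group of type `(p,q,n)` with `p`, `q` prime
and `n ≥ 2`, then for any three pairwise distinct primes `r`, `s`, `t` dividing `|G|`,
if `G` has an element of order `r*s` and an element of order `s*t`, then it has an element
of order `r*t` (every connected component of the Gruenberg–Kegel graph is a clique). -/
theorem stmt_0 {G : Type*} [Group G] [Fintype G] (p q n : ℕ)
    (hp : p.Prime) (hq : q.Prime) (hn : 2 ≤ n)
    (x y z : G) (hx : orderOf x = p) (hy : orderOf y = q) (hz : orderOf z = n)
    (hgen : Subgroup.closure ({x, y, z} : Set G) = ⊤)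
    (hprod : x * y * z = 1)
    (hgpnf : ∀ g : G, (∃ k : ℕ, IsConj (x ^ k) g) ∨ (∃ k : ℕ, IsConj (y ^ k) g) ∨
      (∃ k : ℕ, IsConj (z ^ k) g))
    (r s t : ℕ) (hr : r.Prime) (hs : s.Prime) (ht : t.Prime)
    (hrs : r ≠ s) (hst : s ≠ t) (hrt : r ≠ t)
    (hrdvd : r ∣ Fintype.card G) (hsdvd : s ∣ Fintype.card G) (htdvd : t ∣ Fintype.card G)
    (hab : ∃ a : G, orderOf a = r * s) (hbc : ∃ b : G, orderOf b = s * t) :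
    ∃ c : G, orderOf c = r * t := by
  have key : ∀ (u v : ℕ), u.Prime → v.Prime → (∃ a : G, orderOf a = u * v) → u * v ∣ n := by
    intro u v hu hv ⟨a, ha⟩
    rcases hgpnf a with h | h | ⟨k, c, hc⟩
    · exact absurd (aux_not_prime_pow hp hx hu hv ha h) id
    · exact absurd (aux_not_prime_pow hq hy hu hv ha h) id
    · rw [← ha, ← hc.orderOf_eq, ← hz]
      exact orderOf_pow_dvd k
  have h1 := key r s hr hs hab
  have h2 := key s t hs ht hbc
  have hrn : r ∣ n := (dvd_mul_right r s).trans h1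
  have htn : t ∣ n := (dvd_mul_left t s).trans h2
  have hd : r * t ∣ n := (Nat.Coprime.mul_dvd_of_dvd_of_dvd
    (Nat.coprime_primes hr ht |>.mpr hrt) hrn htn)
  refine ⟨z ^ (n / (r * t)), ?_⟩
  have hn0 : n ≠ 0 := by omega
  rw [orderOf_pow, hz, Nat.gcd_eq_right (Nat.div_dvd_of_dvd hd), Nat.div_div_self hd hn0]
end

section
/- Let G be a finite group which is a gpnf-group of type (p,q,n), where p and q are primes and n ≥ 2. If S is a set of primes dividing |G| such that for all distinct r, s ∈ S the group G contains no element of order r·s, then S has at most 3 elements (i.e., the independence number of the Gruenberg–Kegel graph GK(G) is at most 3). -/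
lemma isConj_orderOf_eq {G : Type*} [Group G] {a b : G} (h : IsConj a b) :
    orderOf a = orderOf b := by
  obtain ⟨c, hc⟩ := h
  have : (MulAut.conj (c : G)) a = b := by
    simp [MulAut.conj_apply, mul_inv_eq_iff_eq_mul, hc.eq]
  rw [← this, MulEquiv.orderOf_eq]

/-- If a finite group `G` is a gpnf-group of type `(p,q,n)` with `p`, `q` prime
and `n ≥ 2`, and `S` is a set of primes dividing `|G|` that are pairwise non-adjacent in the
Gruenberg–Kegel graph (no element of order `r*s` for distinct `r, s ∈ S`), then `|S| ≤ 3`. -/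
theorem stmt_1 {G : Type*} [Group G] [Fintype G] (p q n : ℕ)
    (hp : p.Prime) (hq : q.Prime) (hn : 2 ≤ n)
    (x y z : G) (hx : orderOf x = p) (hy : orderOf y = q) (hz : orderOf z = n)
    (hgen : Subgroup.closure ({x, y, z} : Set G) = ⊤)
    (hprod : x * y * z = 1)
    (hgpnf : ∀ g : G, (∃ k : ℕ, IsConj (x ^ k) g) ∨ (∃ k : ℕ, IsConj (y ^ k) g) ∨
      (∃ k : ℕ, IsConj (z ^ k) g))
    (S : Finset ℕ)
    (hSprime : ∀ r ∈ S, Nat.Prime r)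
    (hSdvd : ∀ r ∈ S, r ∣ Fintype.card G)
    (hanticlique : ∀ r ∈ S, ∀ s ∈ S, r ≠ s → ¬ ∃ g : G, orderOf g = r * s) :
    S.card ≤ 3 := by
  -- Each r ∈ S equals p, equals q, or divides n.
  have key : ∀ r ∈ S, r = p ∨ r = q ∨ r ∣ n := by
    intro r hr
    have hrp := hSprime r hr
    haveI : Fact (Nat.Prime r) := ⟨hrp⟩
    obtain ⟨g, hg⟩ := exists_prime_orderOf_dvd_card r (hSdvd r hr)
    rcases hgpnf g with ⟨k, hk⟩ | ⟨k, hk⟩ | ⟨k, hk⟩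
    · left
      have : r ∣ p := by
        rw [← hg, ← isConj_orderOf_eq hk, ← hx]; exact orderOf_pow_dvd k
      exact ((Nat.prime_dvd_prime_iff_eq hrp hp).mp this)
    · right; left
      have : r ∣ q := by
        rw [← hg, ← isConj_orderOf_eq hk, ← hy]; exact orderOf_pow_dvd k
      exact ((Nat.prime_dvd_prime_iff_eq hrp hq).mp this)
    · right; right
      rw [← hg, ← isConj_orderOf_eq hk, ← hz]; exact orderOf_pow_dvd k
  -- At most one element of S divides n.
  have uniq : ∀ r ∈ S, ∀ s ∈ S, r ∣ n → s ∣ n → r = s := by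
    intro r hr s hs hrn hsn
    by_contra hne
    apply hanticlique r hr s hs hne
    have hcop : Nat.Coprime r s :=
      (Nat.coprime_primes (hSprime r hr) (hSprime s hs)).mpr hne
    have hrs : r * s ∣ n := hcop.mul_dvd_of_dvd_of_dvd hrn hsn
    refine ⟨z ^ (n / (r * s)), ?_⟩
    have hz0 : orderOf z ≠ 0 := by rw [hz]; omega
    have := orderOf_pow_orderOf_div hz0 (hz ▸ hrs)
    rwa [hz] at this
  by_cases hw : ∃ w ∈ S, w ∣ n
  · obtain ⟨w, hwS, hwn⟩ := hw
    have hsub : S ⊆ {p, q, w} := by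
      intro r hr
      rcases key r hr with h | h | h
      · simp [h]
      · simp [h]
      · simp [uniq r hr w hwS h hwn]
    calc S.card ≤ ({p, q, w} : Finset ℕ).card := Finset.card_le_card hsub
      _ ≤ 3 := by
          refine (Finset.card_insert_le _ _).trans ?_
          have := (Finset.card_insert_le q ({w} : Finset ℕ))
          simp at this ⊢; omega
  · have hsub : S ⊆ {p, q} := by
      intro r hr
      rcases key r hr with h | h | h
      · simp [h]
      · simp [h]
      · exact absurd ⟨r, hr, h⟩ hw
    calc S.card ≤ ({p, q} : Finset ℕ).card := Finset.card_le_card hsub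
      _ ≤ 3 := (Finset.card_insert_le _ _).trans (by simp)
end

section
/- No finite nonabelian simple group is a gpnf-group of type (2,…,2,n): there is no finite nonabelian simple group G, integer n ≥ 2, and elements a₁,…,a_r ∈ G with a₁,…,a_{r−1} of order 2 and a_r of order n, which generate G, satisfy a₁a₂⋯a_r = 1, and are such that every element of G is conjugate in G to a power of some aᵢ. -/
/-!
Every element of `G` is an involution or conjugate to a power of `c = a (Fin.last r)`. A finite
group is not the union of the conjugates of a proper subgroup (Jordan; here via Burnside's
lemma), so it suffices to find a proper subgroup meeting every conjugacy class.

If `c` has even order `2m`, take the centralizer of the involution `u = c ^ m`. An involution `g`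
not commuting with `u` inverts `g * u`; if `g * u` has odd order then `g` is conjugate to `u` in
the dihedral group `⟨g, u⟩`, otherwise the involution of `⟨g * u⟩` commutes with `g` and, being
conjugate into `⟨c⟩`, is conjugate to `u`.

If `c` has odd order, take the normalizer of `⟨c⟩`. An involution `g ≠ 1` inverts `x = g * g'`
for a conjugate `g'` of `g` not commuting with it, and `x` is conjugate to a power of `c`. Since
no involution commutes with a nontrivial element of odd order, conjugation by `g` is a
fixed-point-free involutive automorphism of the centralizer of `x`, hence inverts it, and in
particular inverts a conjugate of `c`.
-/

theorem MulAction.exists_forall_smul_ne {G X : Type*} [Group G] [Finite G] [MulAction G X]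
    [Finite X] [IsPretransitive G X] [Nontrivial X] : ∃ g : G, ∀ x : X, g • x ≠ x := by
  classical
  have := Fintype.ofFinite G
  have := Fintype.ofFinite X
  by_contra! hfix
  have : Unique (orbitRel.Quotient G X) :=
    ((pretransitive_iff_unique_quotient_of_nonempty G X).mp inferInstance).some
  have hburnside := sum_card_fixedBy_eq_card_orbits_mul_card_group G X
  rw [Fintype.card_unique, one_mul] at hburnside
  refine hburnside.not_gt ?_
  calc Fintype.card G = ∑ _g : G, 1 := by simp
    _ < ∑ g : G, Fintype.card (fixedBy X g) := by
      refine Finset.sum_lt_sum (fun g _ ↦ Fintype.card_pos_iff.mpr ?_) ⟨1, Finset.mem_univ _, ?_⟩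
      · obtain ⟨x, hx⟩ := hfix g
        exact ⟨⟨x, hx⟩⟩
      · simp [fixedBy_one_eq_univ, Fintype.one_lt_card]

theorem Subgroup.eq_top_of_forall_exists_isConj_mem {G : Type*} [Group G] [Finite G]
    (H : Subgroup G) (hH : ∀ g : G, ∃ h ∈ H, IsConj g h) : H = ⊤ := by
  by_contra hne
  have : Nontrivial (G ⧸ H) := QuotientGroup.nontrivial_iff.mpr hne
  obtain ⟨g, hg⟩ := MulAction.exists_forall_smul_ne (G := G) (X := G ⧸ H)
  obtain ⟨h, hmem, hconj⟩ := hH g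
  obtain ⟨x, rfl⟩ := isConj_iff.mp hconj
  refine hg (x⁻¹ : G) (QuotientGroup.eq.mpr ?_)
  simpa [mul_assoc] using H.inv_mem hmem

namespace IsSimpleGroup

variable {G : Type*} [Group G] [IsSimpleGroup G]

theorem eq_one_of_centralizer_eq_top (hG : ¬ ∀ a b : G, a * b = b * a) {z : G}
    (hz : Subgroup.centralizer {z} = ⊤) : z = 1 := by
  have hmem : z ∈ Subgroup.center G := Subgroup.centralizer_eq_top_iff_subset.mp hz rfl
  rcases (Subgroup.center G).normal_of_characteristic.eq_bot_or_eq_top with h | h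
  · rwa [h, Subgroup.mem_bot] at hmem
  · refine absurd (fun a b ↦ ?_) hG
    exact Subgroup.mem_center_iff.mp (h ▸ Subgroup.mem_top b) a

theorem normalizer_zpowers_ne_top (hG : ¬ ∀ a b : G, a * b = b * a) {c : G} (hc : c ≠ 1) :
    Subgroup.normalizer (Subgroup.zpowers c : Set G) ≠ ⊤ := by
  intro htop
  rcases (Subgroup.normalizer_eq_top_iff.mp htop).eq_bot_or_eq_top with h | h
  · exact hc (Subgroup.zpowers_eq_bot.mp h)
  · have : IsCyclic G := isCyclic_iff_exists_zpowers_eq_top.mpr ⟨c, h⟩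
    exact hG fun a b ↦ IsCyclic.commGroup.mul_comm a b

theorem exists_not_commute_conj (hG : ¬ ∀ a b : G, a * b = b * a) {g : G} (hg : g ≠ 1) :
    ∃ x : G, ¬ Commute (x * g * x⁻¹) g := by
  by_contra! hcomm
  have hle : Subgroup.normalClosure {g} ≤ Subgroup.centralizer {g} := by
    refine (Subgroup.closure_le _).mpr fun y hy ↦ ?_
    obtain ⟨_, rfl, hgy⟩ := Group.mem_conjugatesOfSet_iff.mp hy
    obtain ⟨x, rfl⟩ := isConj_iff.mp hgy
    exact Subgroup.mem_centralizer_singleton_iff.mpr (hcomm x).eq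
  have htop : Subgroup.normalClosure {g} = ⊤ :=
    (Subgroup.normalClosure_normal.eq_bot_or_eq_top).resolve_left fun h ↦
      hg (by simpa [h] using Subgroup.subset_normalClosure (Set.mem_singleton g))
  exact hg (eq_one_of_centralizer_eq_top hG (top_le_iff.mp (htop ▸ hle)))

end IsSimpleGroup

section

variable {G : Type*} [Group G]

theorem IsConj.orderOf_eq {a b : G} (h : IsConj a b) : orderOf a = orderOf b := by
  obtain ⟨c, rfl⟩ := isConj_iff.mp h
  exact ((MulAut.conj c).orderOf_eq a).symm

theorem mem_normalizer_zpowers_of_conj_eq_inv {g c : G} (h : g * c * g⁻¹ = c⁻¹) :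
    g ∈ Subgroup.normalizer (Subgroup.zpowers c : Set G) := by
  rw [Subgroup.mem_normalizer_iff_map_conj_eq]
  have hmap := MonoidHom.map_zpowers (MulAut.conj g).toMonoidHom c
  rwa [MulEquiv.coe_toMonoidHom, MulAut.conj_apply, h, Subgroup.zpowers_inv] at hmap

theorem inv_eq_self_of_sq_eq_one {g : G} (hg : g ^ 2 = 1) : g⁻¹ = g :=
  inv_eq_of_mul_eq_one_right (by rwa [← sq])

theorem commute_of_sq_mul_eq_one {g u : G} (hg : g ^ 2 = 1) (hu : u ^ 2 = 1)
    (hgu : (g * u) ^ 2 = 1) : Commute g u := by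
  have h := inv_eq_self_of_sq_eq_one hgu
  rw [mul_inv_rev, inv_eq_self_of_sq_eq_one hg, inv_eq_self_of_sq_eq_one hu] at h
  exact h.symm

theorem conj_mul_eq_inv {g u : G} (hg : g ^ 2 = 1) (hu : u ^ 2 = 1) :
    g * (g * u) * g⁻¹ = (g * u)⁻¹ := by
  rw [mul_inv_rev, inv_eq_self_of_sq_eq_one hg, inv_eq_self_of_sq_eq_one hu, ← mul_assoc,
    ← sq, hg, one_mul]

theorem pow_conj_eq_inv {g w : G} (h : g * w * g⁻¹ = w⁻¹) (k : ℕ) :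
    g * w ^ k * g⁻¹ = (w ^ k)⁻¹ := by
  rw [← conj_pow, h, inv_pow]

theorem isConj_of_odd_orderOf_mul {g u : G} (hg : g ^ 2 = 1) (hu : u ^ 2 = 1)
    (hodd : Odd (orderOf (g * u))) : IsConj g u := by
  obtain ⟨e, he⟩ := hodd
  set w := g * u
  have hinv : g * w ^ e * g⁻¹ = (w ^ e)⁻¹ := pow_conj_eq_inv (conj_mul_eq_inv hg hu) e
  have hw : w ^ e * w ^ e * w = 1 := by
    rw [← pow_add, ← pow_succ, ← two_mul, ← he, pow_orderOf_eq_one]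
  refine isConj_iff.mpr ⟨w ^ e, ?_⟩
  calc w ^ e * g * (w ^ e)⁻¹ = w ^ e * (g * w ^ e * g⁻¹)⁻¹ * g := by group
    _ = w ^ e * w ^ e * w * w⁻¹ * g := by rw [hinv, inv_inv]; group
    _ = u := by rw [hw, one_mul, mul_inv_rev, inv_mul_cancel_right, inv_eq_self_of_sq_eq_one hu]

theorem pow_eq_pow_of_orderOf_eq_two_mul {c : G} {m l : ℕ} (hc : orderOf c = 2 * m)
    (hsq : (c ^ l) ^ 2 = 1) (hne : c ^ l ≠ 1) : c ^ l = c ^ m := by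
  have hdvd : 2 * m ∣ 2 * l := hc ▸ orderOf_dvd_of_pow_eq_one (by rwa [mul_comm, pow_mul])
  obtain ⟨s, rfl⟩ := Nat.dvd_of_mul_dvd_mul_left two_pos hdvd
  have hcm : c ^ (2 * m) = 1 := hc ▸ pow_orderOf_eq_one c
  rcases Nat.even_or_odd s with ⟨t, rfl⟩ | ⟨t, rfl⟩
  · refine absurd ?_ hne
    rw [← two_mul, mul_left_comm, ← mul_assoc, pow_mul, hcm, one_pow]
  · rw [mul_add, mul_one, mul_left_comm, ← mul_assoc, pow_add, pow_mul, hcm, one_pow, one_mul]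

theorem odd_orderOf_of_isConj_pow {c g : G} {k : ℕ} (hc : Odd (orderOf c))
    (h : IsConj (c ^ k) g) : Odd (orderOf g) :=
  h.orderOf_eq ▸ hc.of_dvd_nat (orderOf_pow_dvd k)

theorem eq_one_or_eq_one_of_commute (hG : ∀ g : G, g ^ 2 = 1 ∨ Odd (orderOf g)) {t y : G}
    (ht : t ^ 2 = 1) (hty : Commute t y) (hy : Odd (orderOf y)) : t = 1 ∨ y = 1 := by
  by_contra! hne
  have ht2 : orderOf t = 2 := orderOf_eq_prime ht hne.1
  have hmul : orderOf (t * y) = 2 * orderOf y := by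
    rw [hty.orderOf_mul_eq_mul_orderOf_of_coprime (ht2 ▸ Nat.coprime_two_left.mpr hy), ht2]
  rcases hG (t * y) with h | h
  · have h2 : 2 * orderOf y ∣ 2 * 1 := hmul ▸ orderOf_dvd_of_pow_eq_one h
    exact hne.2 (orderOf_eq_one_iff.mp (Nat.dvd_one.mp (Nat.dvd_of_mul_dvd_mul_left two_pos h2)))
  · rw [hmul] at h
    exact Nat.not_odd_iff_even.mpr (even_two_mul _) h

theorem conj_eq_inv_of_mem_centralizer [Finite G] {g x : G} (hg : g ^ 2 = 1)
    (hgx : g * x * g⁻¹ = x⁻¹)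
    (hfree : ∀ y ∈ Subgroup.centralizer {x}, Commute g y → y = 1) {y : G}
    (hy : y ∈ Subgroup.centralizer {x}) : g * y * g⁻¹ = y⁻¹ := by
  set W := Subgroup.centralizer {x}
  have hmaps : ∀ y : W, (MulAut.conj g).toMonoidHom.domRestrict W y ∈ W := by
    intro y
    have hxy : Commute x⁻¹ y := .inv_left (Subgroup.mem_centralizer_singleton_iff.mp y.2).symm
    have h := hxy.map (MulAut.conj g)
    rw [MulAut.conj_apply, MulAut.conj_apply, ← conj_inv, hgx, inv_inv] at h
    exact Subgroup.mem_centralizer_singleton_iff.mpr h.eq.symm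
  let φ : W →* W := ((MulAut.conj g).toMonoidHom.domRestrict W).codRestrict W hmaps
  have hφ : ∀ y : W, (φ y : G) = g * y * g⁻¹ := fun _ ↦ rfl
  have hfix : MonoidHom.FixedPointFree φ := fun y hy ↦
    Subtype.ext (hfree y y.2 (mul_inv_eq_iff_eq_mul.mp (congrArg Subtype.val hy)))
  have hinvol : Function.Involutive φ := fun y ↦ Subtype.ext <| by
    calc (φ (φ y) : G) = g ^ 2 * y * (g ^ 2)⁻¹ := by rw [hφ, hφ, sq]; group
      _ = y := by rw [hg]; group
  exact congrArg Subtype.val (congrFun (hfix.coe_eq_inv_of_involutive hinvol) ⟨y, hy⟩)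

theorem exists_isConj_mem_centralizer_pow [Finite G] {c : G} {m : ℕ}
    (hcover : ∀ g : G, g ^ 2 = 1 ∨ ∃ k : ℕ, IsConj (c ^ k) g) (hc : orderOf c = 2 * m)
    (g : G) : ∃ h ∈ Subgroup.centralizer {c ^ m}, IsConj g h := by
  simp only [Subgroup.mem_centralizer_singleton_iff]
  set u := c ^ m
  have hu : u ^ 2 = 1 := by rw [← pow_mul, mul_comm, ← hc, pow_orderOf_eq_one]
  rcases hcover g with hg | ⟨k, hk⟩
  swap
  · exact ⟨c ^ k, Commute.pow_pow_self c k m, hk.symm⟩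
  by_cases hgu : Commute g u
  · exact ⟨g, hgu, .refl g⟩
  obtain ⟨k, hk⟩ := (hcover (g * u)).resolve_left fun h ↦ hgu (commute_of_sq_mul_eq_one hg hu h)
  rcases Nat.even_or_odd (orderOf (g * u)) with ⟨e, he⟩ | hodd
  swap
  · exact ⟨u, rfl, isConj_of_odd_orderOf_mul hg hu hodd⟩
  -- `v` is the involution of `⟨g * u⟩`; it commutes with `g` and is conjugate to `u`
  set v := (g * u) ^ e
  have hv2 : v ^ 2 = 1 := by rw [← pow_mul, mul_comm, two_mul, ← he, pow_orderOf_eq_one]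
  have hv1 : v ≠ 1 := by
    have := orderOf_pos (g * u)
    exact pow_ne_one_of_lt_orderOf (by omega) (by omega)
  have hgv : Commute g v := mul_inv_eq_iff_eq_mul.mp <| by
    rw [pow_conj_eq_inv (conj_mul_eq_inv hg hu) e, inv_eq_self_of_sq_eq_one hv2]
  have hkv : IsConj (c ^ (k * e)) v := pow_mul c k e ▸ hk.pow e
  have hcu : c ^ (k * e) = u := pow_eq_pow_of_orderOf_eq_two_mul hc
    (isConj_one_left.mp (hv2 ▸ hkv.pow 2)) fun h ↦ hv1 (isConj_one_right.mp (h ▸ hkv))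
  obtain ⟨δ, hδ⟩ := isConj_iff.mp (hcu ▸ hkv)
  refine ⟨δ⁻¹ * g * δ, ?_, isConj_iff.mpr ⟨δ⁻¹, by group⟩⟩
  simpa only [MulAut.conj_apply, ← hδ, inv_inv, mul_assoc, inv_mul_cancel_left, inv_mul_cancel,
    mul_one] using (hgv.map (MulAut.conj δ⁻¹)).eq

theorem exists_conj_eq_inv_of_sq_eq_one [IsSimpleGroup G] (hG : ¬ ∀ a b : G, a * b = b * a)
    {g : G} (hg : g ^ 2 = 1) (hg1 : g ≠ 1) : ∃ x : G, x ^ 2 ≠ 1 ∧ g * x * g⁻¹ = x⁻¹ := by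
  obtain ⟨y, hy⟩ := IsSimpleGroup.exists_not_commute_conj hG hg1
  have hw : (y * g * y⁻¹) ^ 2 = 1 := by rw [conj_pow, hg, mul_one, mul_inv_cancel]
  exact ⟨g * (y * g * y⁻¹), fun h ↦ hy (commute_of_sq_mul_eq_one hg hw h).symm,
    conj_mul_eq_inv hg hw⟩

theorem exists_isConj_mem_normalizer_zpowers [Finite G] [IsSimpleGroup G]
    (hG : ¬ ∀ a b : G, a * b = b * a) {c : G}
    (hcover : ∀ g : G, g ^ 2 = 1 ∨ ∃ k : ℕ, IsConj (c ^ k) g) (hc : Odd (orderOf c)) (g : G) :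
    ∃ h ∈ Subgroup.normalizer (Subgroup.zpowers c : Set G), IsConj g h := by
  have hodd : ∀ y : G, y ^ 2 = 1 ∨ Odd (orderOf y) := fun y ↦
    (hcover y).imp_right fun ⟨_, hk⟩ ↦ odd_orderOf_of_isConj_pow hc hk
  rcases hcover g with hg | ⟨k, hk⟩
  swap
  · exact ⟨c ^ k, Subgroup.le_normalizer (Subgroup.pow_mem _ (Subgroup.mem_zpowers c) k),
      hk.symm⟩
  by_cases hg1 : g = 1
  · subst hg1
    exact ⟨1, Subgroup.one_mem _, .refl 1⟩
  obtain ⟨x, hx2, hgx⟩ := exists_conj_eq_inv_of_sq_eq_one hG hg hg1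
  obtain ⟨k, hk⟩ := (hcover x).resolve_left hx2
  have hx1 : x ≠ 1 := by
    rintro rfl
    exact hx2 (one_pow 2)
  have hfree : ∀ y ∈ Subgroup.centralizer {x}, Commute g y → y = 1 := by
    intro y hy hgy
    rcases hodd y with hy2 | hyodd
    · exact (eq_one_or_eq_one_of_commute hodd hy2 (Subgroup.mem_centralizer_singleton_iff.mp hy)
        (odd_orderOf_of_isConj_pow hc hk)).resolve_right hx1
    · exact (eq_one_or_eq_one_of_commute hodd hg hgy hyodd).resolve_left hg1
  obtain ⟨γ, rfl⟩ := isConj_iff.mp hk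
  have hcγ : γ * c * γ⁻¹ ∈ Subgroup.centralizer {γ * c ^ k * γ⁻¹} :=
    Subgroup.mem_centralizer_singleton_iff.mpr ((Commute.self_pow c k).map (MulAut.conj γ)).eq
  have hinv := conj_eq_inv_of_mem_centralizer hg hgx hfree hcγ
  refine ⟨γ⁻¹ * g * γ, mem_normalizer_zpowers_of_conj_eq_inv ?_, isConj_iff.mpr ⟨γ⁻¹, by group⟩⟩
  calc γ⁻¹ * g * γ * c * (γ⁻¹ * g * γ)⁻¹ = γ⁻¹ * (g * (γ * c * γ⁻¹) * g⁻¹) * γ := by group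
    _ = c⁻¹ := by rw [hinv]; group

end

theorem stmt_4_general {G : Type*} [Group G] [Fintype G] [IsSimpleGroup G]
    (hnab : ¬ ∀ g h : G, g * h = h * g)
    (n : ℕ) (hn : 2 ≤ n) (r : ℕ) (a : Fin (r + 1) → G)
    (horders : ∀ i : Fin r, orderOf (a i.castSucc) = 2)
    (hlast : orderOf (a (Fin.last r)) = n)
    (hgpnf : ∀ g : G, ∃ i, ∃ k : ℕ, IsConj (a i ^ k) g) :
    False := by
  set c := a (Fin.last r)
  have hcover : ∀ g : G, g ^ 2 = 1 ∨ ∃ k : ℕ, IsConj (c ^ k) g := by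
    intro g
    obtain ⟨i, k, hik⟩ := hgpnf g
    by_cases hi : i = Fin.last r
    · subst hi
      exact .inr ⟨k, hik⟩
    · obtain ⟨j, rfl⟩ := Fin.exists_castSucc_eq.mpr hi
      have hj : a j.castSucc ^ 2 = 1 := horders j ▸ pow_orderOf_eq_one _
      have h := hik.pow 2
      rw [pow_right_comm, hj, one_pow] at h
      exact .inl (isConj_one_right.mp h)
  have hc1 : c ≠ 1 := fun h ↦ by
    rw [h, orderOf_one] at hlast
    omega
  rcases Nat.even_or_odd (orderOf c) with ⟨m, hm⟩ | hodd
  · rw [← two_mul] at hm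
    have hcm : c ^ m ≠ 1 := by
      have := orderOf_pos c
      exact pow_ne_one_of_lt_orderOf (by omega) (by omega)
    exact hcm (IsSimpleGroup.eq_one_of_centralizer_eq_top hnab
      (Subgroup.eq_top_of_forall_exists_isConj_mem _
        (exists_isConj_mem_centralizer_pow hcover hm)))
  · exact IsSimpleGroup.normalizer_zpowers_ne_top hnab hc1
      (Subgroup.eq_top_of_forall_exists_isConj_mem _
        (exists_isConj_mem_normalizer_zpowers hnab hcover hodd))

/-- No finite nonabelian simple group is a gpnf-group of type `(2,…,2,n)`:
there is no finite nonabelian simple group `G`, integer `n ≥ 2`, and elements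
`a 0, …, a r` of `G`, with `a 0, …, a (r-1)` of order `2` and the last one of order `n`,
which generate `G`, have product `1`, and are such that every element of `G` is conjugate
to a power of some `a i`. -/
theorem stmt_4 {G : Type*} [Group G] [Fintype G] [IsSimpleGroup G]
    (hnab : ¬ ∀ g h : G, g * h = h * g)
    (n : ℕ) (hn : 2 ≤ n) (r : ℕ) (a : Fin (r + 1) → G)
    (horders : ∀ i : Fin r, orderOf (a i.castSucc) = 2)
    (hlast : orderOf (a (Fin.last r)) = n)
    (hgen : Subgroup.closure (Set.range a) = ⊤)
    (hprod : (List.ofFn a).prod = 1)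
    (hgpnf : ∀ g : G, ∃ i, ∃ k : ℕ, IsConj (a i ^ k) g) :
    False :=
  stmt_4_general hnab n hn r a horders hlast hgpnf
end

section
/- A finite group G is the set-theoretic union of three proper cyclic subgroups if and only if G is isomorphic to T × Z_k, where k is odd and T is either the Klein four-group Z₂ × Z₂ or the quaternion group Q₈ of order 8. -/
/-!
If `G = A ∪ B ∪ C` with proper subgroups, any two of them meet in the same subgroup `D`, and each
of `A ∖ D`, `B ∖ D`, `C ∖ D` is a single coset of `D`, so `G / D` is a Klein four-group. When
`A = ⟨x⟩`, `B = ⟨y⟩`, `C = ⟨c⟩` are cyclic, `D = ⟨x²⟩ = ⟨y²⟩ = ⟨c²⟩` is central of some order `n`,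
`|G| = 4n`, and the commutator `z = ⁅x, y⁆` lies in `D` with `z² = 1`.

For odd `n` we get `z = 1`, and `G ≅ V₄ × Z_n` is generated by the commuting involutions `xⁿ, yⁿ`
together with `D`. For even `n = 2m`, `xⁿ = yⁿ` is the unique involution of `D`, and
`(xy)ⁿ = z ^ m`, which is not `1` because `xy` generates `C` modulo `D`. Hence `m` is odd and
`z = xⁿ`, so `x ^ m, y ^ m` satisfy the defining relations of `Q₈` and `G ≅ Q₈ × Z_m`.

Conversely `V₄` and `Q₈` are unions of three proper cyclic subgroups, and these stay cyclic after
multiplying by a cyclic group of odd order.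
-/

open Subgroup Multiplicative
open scoped commutatorElement

section Cyclic

variable {G : Type*} [Group G]

theorem commute_of_mem_zpowers {g a b : G} (ha : a ∈ zpowers g) (hb : b ∈ zpowers g) :
    Commute a b := by
  obtain ⟨k, rfl⟩ := ha
  obtain ⟨l, rfl⟩ := hb
  exact Commute.zpow_zpow_self g k l

theorem pow_orderOf_eq_one_of_mem_zpowers {g d : G} (hd : d ∈ zpowers g) :
    d ^ orderOf g = 1 :=
  orderOf_dvd_iff_pow_eq_one.mp (orderOf_dvd_of_mem_zpowers hd)

theorem eq_pow_mul_inv_sq_pow {n l : ℕ} (hn : n = 2 * l + 1) (w : G) :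
    w = w ^ n * ((w ^ 2) ^ l)⁻¹ := by
  rw [hn, ← pow_mul, pow_succ', mul_inv_cancel_right]

theorem pow_pow_four_eq_one {x : G} {m : ℕ} (hm : orderOf (x ^ 2) = 2 * m) :
    (x ^ m) ^ (2 * 2) = 1 := by
  rw [← pow_mul, show m * (2 * 2) = 2 * (2 * m) by ring, pow_mul, ← hm, pow_orderOf_eq_one]

theorem zpowers_sq_eq_of_forall_mem_or_mul_inv_mem {w : G} {D : Subgroup G}
    (hD : D ≤ zpowers w) (hw : w ∉ D) (h : ∀ g ∈ zpowers w, g ∈ D ∨ g * w⁻¹ ∈ D) :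
    zpowers (w ^ 2) = D := by
  have hw2 : w ^ 2 ∈ D :=
    (h _ (npow_mem_zpowers w 2)).resolve_right (by rwa [sq, mul_inv_cancel_right])
  refine le_antisymm (zpowers_le.mpr hw2) fun d hd => ?_
  obtain ⟨k, rfl⟩ := mem_zpowers_iff.mp (hD hd)
  obtain ⟨l, rfl | rfl⟩ := Int.even_or_odd' k
  · exact mem_zpowers_iff.mpr ⟨l, by rw [zpow_mul, zpow_ofNat]⟩
  · refine absurd ?_ hw
    simpa [zpow_add, zpow_mul] using mul_mem (inv_mem (zpow_mem hw2 l)) hd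

theorem orderOf_eq_two_mul_orderOf_sq {w : G} (hw : w ∉ zpowers (w ^ 2)) :
    orderOf w = 2 * orderOf (w ^ 2) := by
  rw [orderOf_pow' w two_ne_zero]
  obtain ⟨o, ho | ho⟩ := Nat.even_or_odd' (orderOf w)
  · rw [ho, Nat.gcd_mul_right_left]
    simp
  · refine absurd (mem_zpowers_iff.mpr ⟨((o + 1 : ℕ) : ℤ), ?_⟩) hw
    rw [zpow_natCast, ← pow_mul, show 2 * (o + 1) = orderOf w + 1 by omega, pow_succ,
      pow_orderOf_eq_one, one_mul]

theorem pow_orderOf_sq_ne_one [Finite G] {w g : G} (hg : g ∈ zpowers w)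
    (hg2 : g ∉ zpowers (w ^ 2)) : g ^ orderOf (w ^ 2) ≠ 1 := by
  have hw : w ∉ zpowers (w ^ 2) := fun hw => hg2 (zpowers_le.mpr hw hg)
  have hn : (orderOf (w ^ 2) : ℤ) ≠ 0 := by exact_mod_cast (orderOf_pos (w ^ (2 : ℕ))).ne'
  obtain ⟨k, rfl⟩ := mem_zpowers_iff.mp hg
  obtain ⟨l, rfl | rfl⟩ := Int.even_or_odd' k
  · exact absurd (mem_zpowers_iff.mpr ⟨l, by rw [zpow_mul, zpow_ofNat]⟩) hg2
  · intro h1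
    rw [← zpow_natCast, ← zpow_mul, ← orderOf_dvd_iff_zpow_eq_one,
      orderOf_eq_two_mul_orderOf_sq hw, Nat.cast_mul, Nat.cast_ofNat,
      mul_dvd_mul_iff_right hn] at h1
    omega

theorem eq_pow_of_sq_eq_one_of_mem_zpowers {g h : G} {m : ℕ} (hg : orderOf g = 2 * m)
    (hh : h ∈ zpowers g) (h2 : h ^ 2 = 1) (h1 : h ≠ 1) : h = g ^ m := by
  obtain ⟨k, rfl⟩ := mem_zpowers_iff.mp hh
  rw [← zpow_natCast, ← zpow_mul, ← orderOf_dvd_iff_zpow_eq_one, hg, Nat.cast_mul,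
    mul_comm k, Nat.cast_ofNat, mul_dvd_mul_iff_left two_ne_zero] at h2
  obtain ⟨t, rfl⟩ := h2
  have hgm : (g ^ m) ^ 2 = 1 := by rw [← pow_mul, mul_comm, ← hg, pow_orderOf_eq_one]
  rw [zpow_mul, zpow_natCast] at h1 ⊢
  obtain ⟨s, rfl | rfl⟩ := Int.even_or_odd' t
  · rw [zpow_mul, zpow_ofNat, hgm, one_zpow] at h1
    exact absurd rfl h1
  · rw [zpow_add, zpow_mul, zpow_ofNat, hgm, one_zpow, one_mul, zpow_one]

theorem commutatorElement_pow_right {x y : G} (hy : Commute ⁅x, y⁆ y) (b : ℕ) :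
    ⁅x, y ^ b⁆ = ⁅x, y⁆ ^ b := by
  have hconj : x * y * x⁻¹ = ⁅x, y⁆ * y := by rw [commutatorElement_def]; group
  rw [commutatorElement_def, ← conj_pow, hconj, hy.mul_pow, mul_inv_cancel_right]

theorem commutatorElement_pow_pow {x y : G} (hx : Commute ⁅x, y⁆ x) (hy : Commute ⁅x, y⁆ y)
    (a b : ℕ) : ⁅x ^ a, y ^ b⁆ = ⁅x, y⁆ ^ (a * b) := by
  have h1 : Commute ⁅y ^ b, x⁆ x := by
    rw [← commutatorElement_inv, commutatorElement_pow_right hy]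
    exact (hx.pow_left b).inv_left
  rw [← commutatorElement_inv (y ^ b), commutatorElement_pow_right h1, ← commutatorElement_inv,
    inv_pow, inv_inv, commutatorElement_pow_right hy, ← pow_mul, mul_comm]

end Cyclic

section Lifts

variable {G : Type*} [Group G]

def zmodPowersHom (g : G) (n : ℕ) (hg : g ^ n = 1) : Multiplicative (ZMod n) →* G :=
  AddMonoidHom.toMultiplicativeLeft
    (ZMod.lift n ⟨zmultiplesHom (Additive G) (Additive.ofMul g), by
      rw [zmultiplesHom_apply, natCast_zsmul, ← ofMul_pow, hg, ofMul_one]⟩)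

theorem zmodPowersHom_ofAdd_intCast (g : G) (n : ℕ) (hg : g ^ n = 1) (k : ℤ) :
    zmodPowersHom g n hg (ofAdd (k : ZMod n)) = g ^ k := by
  simp [zmodPowersHom]

theorem zmodPowersHom_ofAdd_one (g : G) (n : ℕ) (hg : g ^ n = 1) :
    zmodPowersHom g n hg (ofAdd 1) = g := by
  simpa using zmodPowersHom_ofAdd_intCast g n hg 1

theorem range_zmodPowersHom (g : G) (n : ℕ) (hg : g ^ n = 1) :
    (zmodPowersHom g n hg).range = zpowers g := by
  ext h
  constructor
  · rintro ⟨a, rfl⟩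
    obtain ⟨k, hk⟩ := ZMod.intCast_surjective (toAdd a)
    rw [← ofAdd_toAdd a, ← hk, zmodPowersHom_ofAdd_intCast]
    exact zpow_mem_zpowers g k
  · rintro ⟨k, rfl⟩
    exact ⟨ofAdd (k : ZMod n), zmodPowersHom_ofAdd_intCast g n hg k⟩

theorem zmodPowersHom_mul_eq_mul_neg {i j : G} {n : ℕ} (hi : i ^ n = 1)
    (hij : i * j = j * i⁻¹) (k : ZMod n) :
    zmodPowersHom i n hi (ofAdd k) * j = j * zmodPowersHom i n hi (ofAdd (-k)) := by
  obtain ⟨t, rfl⟩ := ZMod.intCast_surjective k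
  rw [← Int.cast_neg, zmodPowersHom_ofAdd_intCast, zmodPowersHom_ofAdd_intCast, zpow_neg,
    ← inv_zpow]
  exact ((show SemiconjBy j i⁻¹ i from hij.symm).zpow_right t).eq.symm

namespace QuaternionGroup

variable {n : ℕ}

def lift (i j : G) (hi : i ^ (2 * n) = 1) (hj : j ^ 2 = i ^ n) (hij : i * j = j * i⁻¹) :
    QuaternionGroup n →* G where
  toFun
    | a k => zmodPowersHom i (2 * n) hi (ofAdd k)
    | xa k => j * zmodPowersHom i (2 * n) hi (ofAdd k)
  map_one' := by
    show zmodPowersHom i (2 * n) hi (ofAdd 0) = 1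
    rw [ofAdd_zero, map_one]
  map_mul' := by
    have hn : zmodPowersHom i (2 * n) hi (ofAdd (n : ZMod (2 * n))) = i ^ n := by
      simpa using zmodPowersHom_ofAdd_intCast i (2 * n) hi n
    rintro (k | k) (l | l)
    · simp only [a_mul_a, ofAdd_add, map_mul]
    · simp only [a_mul_xa]
      rw [← mul_assoc, zmodPowersHom_mul_eq_mul_neg hi hij, mul_assoc, ← map_mul, ← ofAdd_add,
        neg_add_eq_sub]
    · simp only [xa_mul_a, ofAdd_add, map_mul, mul_assoc]
    · simp only [xa_mul_xa]
      rw [add_sub_assoc, ← neg_add_eq_sub, ofAdd_add, ofAdd_add, map_mul, map_mul, hn, ← hj,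
        mul_assoc j, ← mul_assoc _ j, zmodPowersHom_mul_eq_mul_neg hi hij, sq]
      group

theorem lift_a_one (i j : G) (hi : i ^ (2 * n) = 1) (hj : j ^ 2 = i ^ n)
    (hij : i * j = j * i⁻¹) : lift i j hi hj hij (a 1) = i :=
  zmodPowersHom_ofAdd_one i (2 * n) hi

theorem lift_xa_zero (i j : G) (hi : i ^ (2 * n) = 1) (hj : j ^ 2 = i ^ n)
    (hij : i * j = j * i⁻¹) : lift i j hi hj hij (xa 0) = j := by
  simp [lift]

end QuaternionGroup

def kleinFourLift (u v : G) (hu : u ^ 2 = 1) (hv : v ^ 2 = 1) (huv : Commute u v) :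
    Multiplicative (ZMod 2 × ZMod 2) →* G :=
  ((zmodPowersHom u 2 hu).noncommCoprod (zmodPowersHom v 2 hv) fun a b => by
    obtain ⟨k, hk⟩ := mem_zpowers_iff.mp ((range_zmodPowersHom u 2 hu).le ⟨a, rfl⟩)
    obtain ⟨l, hl⟩ := mem_zpowers_iff.mp ((range_zmodPowersHom v 2 hv).le ⟨b, rfl⟩)
    rw [← hk, ← hl]
    exact huv.zpow_zpow k l).comp
      (MulEquiv.prodMultiplicative (ZMod 2) (ZMod 2)).toMonoidHom

theorem kleinFourLift_ofAdd_one_zero (u v : G) (hu : u ^ 2 = 1) (hv : v ^ 2 = 1)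
    (huv : Commute u v) : kleinFourLift u v hu hv huv (ofAdd (1, 0)) = u := by
  simp [kleinFourLift, MulEquiv.prodMultiplicative, zmodPowersHom_ofAdd_one]

theorem kleinFourLift_ofAdd_zero_one (u v : G) (hu : u ^ 2 = 1) (hv : v ^ 2 = 1)
    (huv : Commute u v) : kleinFourLift u v hu hv huv (ofAdd (0, 1)) = v := by
  simp [kleinFourLift, MulEquiv.prodMultiplicative, zmodPowersHom_ofAdd_one]

theorem nonempty_mulEquiv_prod_of_card_eq {T K : Type*} [Group T] [Group K] [Finite T]
    [Finite K] (f : T →* G) (g : K →* G) (comm : ∀ t k, Commute (f t) (g k))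
    (hsup : f.range ⊔ g.range = ⊤) (hcard : Nat.card G = Nat.card T * Nat.card K) :
    Nonempty (G ≃* T × K) := by
  have hsurj : Function.Surjective (f.noncommCoprod g comm) := by
    rw [← MonoidHom.range_eq_top, MonoidHom.noncommCoprod_range, hsup]
  have hbij :=
    (Nat.bijective_iff_surjective_and_card _).mpr ⟨hsurj, by rw [Nat.card_prod, hcard]⟩
  exact ⟨(MulEquiv.ofBijective _ hbij).symm⟩

end Lifts

section Cover

variable {G : Type*} [Group G]

theorem Subgroup.eq_top_or_eq_top_of_forall_mem_or_mem {A B : Subgroup G}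
    (h : ∀ g, g ∈ A ∨ g ∈ B) : A = ⊤ ∨ B = ⊤ := by
  refine or_iff_not_imp_left.mpr fun hA => (eq_top_iff' B).mpr fun b => ?_
  obtain ⟨a, ha⟩ : ∃ a, a ∉ A := by simpa [eq_top_iff'] using hA
  refine (h b).elim (fun hb => ?_) id
  have hba : b * a ∈ B := (h _).resolve_left fun hba => ha ((mul_mem_cancel_left hb).mp hba)
  exact (mul_mem_cancel_right ((h a).resolve_left ha)).mp hba

structure Subgroup.IsProperTripleCover (A B C : Subgroup G) : Prop where
  left_ne_top : A ≠ ⊤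
  mid_ne_top : B ≠ ⊤
  right_ne_top : C ≠ ⊤
  mem_or_mem_or_mem : ∀ g, g ∈ A ∨ g ∈ B ∨ g ∈ C

namespace Subgroup.IsProperTripleCover

variable {A B C : Subgroup G}

theorem swap12 (h : IsProperTripleCover A B C) : IsProperTripleCover B A C :=
  ⟨h.mid_ne_top, h.left_ne_top, h.right_ne_top, fun g => by
    have := h.mem_or_mem_or_mem g; tauto⟩

theorem swap23 (h : IsProperTripleCover A B C) : IsProperTripleCover A C B :=
  ⟨h.left_ne_top, h.right_ne_top, h.mid_ne_top, fun g => by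
    have := h.mem_or_mem_or_mem g; tauto⟩

theorem swap13 (h : IsProperTripleCover A B C) : IsProperTripleCover C B A :=
  ⟨h.right_ne_top, h.mid_ne_top, h.left_ne_top, fun g => by
    have := h.mem_or_mem_or_mem g; tauto⟩

theorem not_le (h : IsProperTripleCover A B C) : ¬A ≤ B := fun hle =>
  (eq_top_or_eq_top_of_forall_mem_or_mem fun g =>
    (h.mem_or_mem_or_mem g).elim (Or.inl ∘ @hle g) id).elim h.mid_ne_top h.right_ne_top

theorem inf_le (h : IsProperTripleCover A B C) : A ⊓ B ≤ C := by
  obtain ⟨c, hcA, hcB⟩ : ∃ c, c ∉ A ∧ c ∉ B := by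
    by_contra! hc
    exact (eq_top_or_eq_top_of_forall_mem_or_mem fun g => or_iff_not_imp_left.mpr (hc g)).elim
      h.left_ne_top h.mid_ne_top
  have hcC : c ∈ C := ((h.mem_or_mem_or_mem c).resolve_left hcA).resolve_left hcB
  intro d hd
  obtain ⟨hdA, hdB⟩ := mem_inf.mp hd
  rcases h.mem_or_mem_or_mem (d * c) with hA | hB | hC
  · exact absurd ((mul_mem_cancel_left hdA).mp hA) hcA
  · exact absurd ((mul_mem_cancel_left hdB).mp hB) hcB
  · exact (mul_mem_cancel_right hcC).mp hC

theorem inf_eq (h : IsProperTripleCover A B C) : A ⊓ C = A ⊓ B :=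
  le_antisymm (le_inf inf_le_left h.swap23.inf_le) (le_inf inf_le_left h.inf_le)

theorem mul_mem_right {a b : G} (h : IsProperTripleCover A B C) (ha : a ∈ A) (haB : a ∉ B)
    (hb : b ∈ B) (hbA : b ∉ A) : a * b ∈ C := by
  rcases h.mem_or_mem_or_mem (a * b) with hA | hB | hC
  · exact absurd ((mul_mem_cancel_left ha).mp hA) hbA
  · exact absurd ((mul_mem_cancel_right hb).mp hB) haB
  · exact hC

theorem mul_inv_mem_mid {g x : G} (h : IsProperTripleCover A B C) (hg : g ∈ A) (hgB : g ∉ B)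
    (hx : x ∈ A) (hxB : x ∉ B) : g * x⁻¹ ∈ B := by
  obtain ⟨y, hy, hyA⟩ := SetLike.not_le_iff_exists.mp h.swap12.not_le
  have hC : g * x⁻¹ ∈ C := by
    simpa using Subgroup.mul_mem _ (h.mul_mem_right hg hgB hy hyA)
      (inv_mem (h.mul_mem_right hx hxB hy hyA))
  exact h.swap23.inf_le (mem_inf.mpr ⟨Subgroup.mul_mem _ hg (inv_mem hx), hC⟩)

theorem commutatorElement_mem_inf {x y : G} (h : IsProperTripleCover A B C) (hx : x ∈ A)
    (hxB : x ∉ B) (hy : y ∈ B) (hyA : y ∉ A) : ⁅x, y⁆ ∈ A ⊓ B := by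
  have hxy := h.mul_mem_right hx hxB hy hyA
  have hyx := h.swap12.mul_mem_right hy hyA hx hxB
  have hA : ⁅x, y⁆ ∈ A := by
    rw [show ⁅x, y⁆ = x * y * (y * x)⁻¹ by group]
    exact h.swap13.swap23.mul_inv_mem_mid hxy (fun h' => hyA ((mul_mem_cancel_left hx).mp h'))
      hyx (fun h' => hyA ((mul_mem_cancel_right hx).mp h'))
  have hC : ⁅x, y⁆ ∈ C := by
    rw [show ⁅x, y⁆ = x * y * (y * x)⁻¹ by group]
    exact Subgroup.mul_mem _ hxy (inv_mem hyx)
  exact mem_inf.mpr ⟨hA, h.swap13.swap23.inf_le (mem_inf.mpr ⟨hC, hA⟩)⟩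

theorem eq_top_of_le (h : IsProperTripleCover A B C) {H : Subgroup G} (hA : A ≤ H)
    (hB : B ≤ H) : H = ⊤ := by
  obtain ⟨x, hx, hxB⟩ := SetLike.not_le_iff_exists.mp h.not_le
  obtain ⟨y, hy, hyA⟩ := SetLike.not_le_iff_exists.mp h.swap12.not_le
  have hxy := h.mul_mem_right hx hxB hy hyA
  have hxyA : x * y ∉ A := fun h' => hyA ((mul_mem_cancel_left hx).mp h')
  refine (eq_top_iff' H).mpr fun g => ?_
  rcases h.mem_or_mem_or_mem g with hg | hg | hg
  · exact hA hg
  · exact hB hg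
  · by_cases hgA : g ∈ A
    · exact hA hgA
    · have := hA (h.swap13.swap23.mul_inv_mem_mid hg hgA hxy hxyA)
      simpa only [inv_mul_cancel_right] using Subgroup.mul_mem _ this (mul_mem (hA hx) (hB hy))

theorem index_eq_two (h : IsProperTripleCover A B C) : A.index = 2 := by
  obtain ⟨y, hy, hyA⟩ := SetLike.not_le_iff_exists.mp h.swap12.not_le
  have hyC : y ∉ C := fun hyC => hyA (h.swap13.swap12.inf_le (mem_inf.mpr ⟨hy, hyC⟩))
  refine index_eq_two_iff_exists_notMem_and.mpr
    ⟨y, hyA, fun b => or_iff_not_imp_right.mpr fun hb => ?_⟩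
  rcases (h.mem_or_mem_or_mem b).resolve_left hb with hbB | hbC
  · simpa using h.swap12.mul_inv_mem_mid hbB hb (inv_mem hy) (by rwa [inv_mem_iff])
  · have hbB : b ∉ B := fun hbB => hb (h.swap13.swap12.inf_le (mem_inf.mpr ⟨hbB, hbC⟩))
    exact h.swap13.mul_mem_right hbC hbB hy hyC

theorem zpowers_sq_eq_inf {x : G} (h : IsProperTripleCover (zpowers x) B C) :
    zpowers (x ^ 2) = zpowers x ⊓ B := by
  have hxB : x ∉ B := fun hx => h.not_le (zpowers_le.mpr hx)
  refine zpowers_sq_eq_of_forall_mem_or_mul_inv_mem inf_le_left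
    (fun hx => hxB (mem_inf.mp hx).2) fun g hg => ?_
  by_cases hgB : g ∈ B
  · exact .inl (mem_inf.mpr ⟨hg, hgB⟩)
  · exact .inr (mem_inf.mpr
      ⟨mul_mem hg (inv_mem (mem_zpowers x)), h.mul_inv_mem_mid hg hgB (mem_zpowers x) hxB⟩)

end Subgroup.IsProperTripleCover

end Cover

section CoverPair

variable {G : Type*} [Group G]

/-- What the generators `x`, `y` of two of the subgroups in a cover
`G = ⟨x⟩ ∪ ⟨y⟩ ∪ ⟨c⟩` by proper subgroups satisfy; `⟨x ^ 2⟩` is the intersection of any two. -/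
structure IsCoverPair (x y : G) : Prop where
  commute : ∀ d ∈ zpowers (x ^ 2), ∀ g : G, Commute d g
  sq_mem : y ^ 2 ∈ zpowers (x ^ 2)
  commutatorElement_mem : ⁅x, y⁆ ∈ zpowers (x ^ 2)
  pow_ne_one_right : y ^ orderOf (x ^ 2) ≠ 1
  mul_pow_ne_one : (x * y) ^ orderOf (x ^ 2) ≠ 1
  card_eq : Nat.card G = 4 * orderOf (x ^ 2)
  eq_top : ∀ H : Subgroup G, x ∈ H → y ∈ H → H = ⊤

theorem Subgroup.IsProperTripleCover.isCoverPair [Finite G] {x y c : G}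
    (h : IsProperTripleCover (zpowers x) (zpowers y) (zpowers c)) : IsCoverPair x y := by
  set D := zpowers x ⊓ zpowers y
  have hxD : zpowers (x ^ 2) = D := h.zpowers_sq_eq_inf
  have hyD : zpowers (y ^ 2) = D := by rw [h.swap12.zpowers_sq_eq_inf, inf_comm]
  have hcD : zpowers (c ^ 2) = D := by
    rw [h.swap13.zpowers_sq_eq_inf, inf_comm, h.swap12.inf_eq, inf_comm]
  have horder {w : G} (hw : zpowers (w ^ 2) = D) : orderOf (w ^ 2) = orderOf (x ^ 2) := by
    rw [← Nat.card_zpowers, ← Nat.card_zpowers, hw, hxD]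
  have hxB : x ∉ zpowers y := fun hx => h.not_le (zpowers_le.mpr hx)
  have hyA : y ∉ zpowers x := fun hy => h.swap12.not_le (zpowers_le.mpr hy)
  have hxyA : x * y ∉ zpowers x := fun h' => hyA ((mul_mem_cancel_left (mem_zpowers x)).mp h')
  refine ⟨fun d hd g => ?_, ?_, ?_, ?_, ?_, ?_, fun H hx hy => ?_⟩
  · rw [hxD] at hd
    rcases h.mem_or_mem_or_mem g with hg | hg | hg
    · exact commute_of_mem_zpowers (mem_inf.mp hd).1 hg
    · exact commute_of_mem_zpowers (mem_inf.mp hd).2 hg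
    · exact commute_of_mem_zpowers (h.inf_le hd) hg
  · rw [hxD, ← hyD]
    exact mem_zpowers _
  · rw [hxD]
    exact h.commutatorElement_mem_inf (mem_zpowers x) hxB (mem_zpowers y) hyA
  · rw [← horder hyD]
    refine pow_orderOf_sq_ne_one (mem_zpowers y) ?_
    rw [hyD]
    exact fun hy => hyA (mem_inf.mp hy).1
  · rw [← horder hcD]
    refine pow_orderOf_sq_ne_one (h.mul_mem_right (mem_zpowers x) hxB (mem_zpowers y) hyA) ?_
    rw [hcD]
    exact fun hxy => hxyA (mem_inf.mp hxy).1
  · rw [← card_mul_index (zpowers x), h.index_eq_two, Nat.card_zpowers,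
      orderOf_eq_two_mul_orderOf_sq (by rw [hxD]; exact fun hx => hxB (mem_inf.mp hx).2)]
    ring
  · exact h.eq_top_of_le (zpowers_le.mpr hx) (zpowers_le.mpr hy)

namespace IsCoverPair

variable {x y : G}

theorem commutatorElement_sq (h : IsCoverPair x y) : ⁅x, y⁆ ^ 2 = 1 := by
  have hx2 : Commute (x ^ 2) y := h.commute _ (mem_zpowers _) y
  have hz : Commute ⁅x, y⁆ x := h.commute _ h.commutatorElement_mem x
  have key := commutatorElement_mul_left_eq_conj_mul x x y
  rw [← sq, commutatorElement_eq_one_iff_commute.mpr hx2, hz.symm.mul_inv_cancel] at key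
  rw [sq, key]

theorem mul_sq (h : IsCoverPair x y) : (x * y) ^ 2 = ⁅x, y⁆ * x ^ 2 * y ^ 2 := by
  calc (x * y) ^ 2 = ⁅x, y⁆ * (y * x ^ 2) * y := by
        simp only [sq, commutatorElement_def]; group
    _ = ⁅x, y⁆ * x ^ 2 * y ^ 2 := by
        rw [← (h.commute _ (mem_zpowers _) y).eq, sq y]; group

theorem nonempty_mulEquiv_kleinFour_prod [Finite G] (h : IsCoverPair x y)
    (hn : Odd (orderOf (x ^ 2))) : Nonempty (G ≃*
      Multiplicative (ZMod 2 × ZMod 2) × Multiplicative (ZMod (orderOf (x ^ 2)))) := by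
  set n := orderOf (x ^ 2)
  have : NeZero n := ⟨hn.pos.ne'⟩
  have hz : ⁅x, y⁆ = 1 := by
    have hgcd : ⁅x, y⁆ ^ Nat.gcd 2 n = 1 :=
      pow_gcd_eq_one.mpr ⟨h.commutatorElement_sq,
        pow_orderOf_eq_one_of_mem_zpowers h.commutatorElement_mem⟩
    rwa [Nat.coprime_two_left.mpr hn, pow_one] at hgcd
  have hu : (x ^ n) ^ 2 = 1 := by rw [← pow_mul, mul_comm, pow_mul, pow_orderOf_eq_one]
  have hv : (y ^ n) ^ 2 = 1 := by
    rw [← pow_mul, mul_comm, pow_mul, pow_orderOf_eq_one_of_mem_zpowers h.sq_mem]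
  have huv : Commute (x ^ n) (y ^ n) :=
    (commutatorElement_eq_one_iff_commute.mp hz).pow_pow n n
  set f := kleinFourLift _ _ hu hv huv
  set g := zmodPowersHom (x ^ 2) n (pow_orderOf_eq_one _)
  have hD : zpowers (x ^ 2) ≤ f.range ⊔ g.range :=
    (range_zmodPowersHom _ _ _).ge.trans le_sup_right
  obtain ⟨l, hl⟩ := hn
  refine nonempty_mulEquiv_prod_of_card_eq f g (fun t k => ?_) (h.eq_top _ ?_ ?_) ?_
  · exact (h.commute _ ((range_zmodPowersHom _ _ _).le ⟨k, rfl⟩) _).symm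
  · rw [eq_pow_mul_inv_sq_pow hl x]
    exact mul_mem (mem_sup_left (MonoidHom.mem_range.mpr
      ⟨_, kleinFourLift_ofAdd_one_zero _ _ hu hv huv⟩)) (inv_mem (hD (pow_mem (mem_zpowers _) l)))
  · rw [eq_pow_mul_inv_sq_pow hl y]
    exact mul_mem (mem_sup_left (MonoidHom.mem_range.mpr
      ⟨_, kleinFourLift_ofAdd_zero_one _ _ hu hv huv⟩)) (inv_mem (hD (pow_mem h.sq_mem l)))
  · rw [h.card_eq]
    simp [n, Nat.card_eq_fintype_card]

section Quaternion

variable {m : ℕ}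

theorem pow_orderOf_sq_right (h : IsCoverPair x y) (hm : orderOf (x ^ 2) = 2 * m) :
    y ^ orderOf (x ^ 2) = (x ^ 2) ^ m := by
  refine eq_pow_of_sq_eq_one_of_mem_zpowers hm ?_ ?_ h.pow_ne_one_right
  · rw [hm, pow_mul]
    exact pow_mem h.sq_mem m
  · rw [← pow_mul, mul_comm, pow_mul, pow_orderOf_eq_one_of_mem_zpowers h.sq_mem]

theorem mul_pow_orderOf_sq (h : IsCoverPair x y) (hm : orderOf (x ^ 2) = 2 * m) :
    (x * y) ^ orderOf (x ^ 2) = ⁅x, y⁆ ^ m := by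
  have hD {a b : G} (ha : a ∈ zpowers (x ^ 2)) (hb : b ∈ zpowers (x ^ 2)) : Commute a b :=
    commute_of_mem_zpowers ha hb
  have hsq : ((x ^ 2) ^ m) ^ 2 = 1 := by rw [← pow_mul, mul_comm, ← hm, pow_orderOf_eq_one]
  rw [hm, pow_mul, h.mul_sq,
    (hD (mul_mem h.commutatorElement_mem (mem_zpowers _)) h.sq_mem).mul_pow,
    (hD h.commutatorElement_mem (mem_zpowers _)).mul_pow, ← pow_mul y, ← hm,
    h.pow_orderOf_sq_right hm, mul_assoc, ← sq, hsq, mul_one]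

theorem odd_of_orderOf_sq_eq (h : IsCoverPair x y) (hm : orderOf (x ^ 2) = 2 * m) : Odd m :=
  Nat.not_even_iff_odd.mp fun ⟨r, hr⟩ => h.mul_pow_ne_one (by
    rw [h.mul_pow_orderOf_sq hm, hr, ← two_mul, pow_mul, h.commutatorElement_sq, one_pow])

theorem commutatorElement_eq_of_orderOf_sq_eq (h : IsCoverPair x y)
    (hm : orderOf (x ^ 2) = 2 * m) : ⁅x, y⁆ = (x ^ 2) ^ m :=
  eq_pow_of_sq_eq_one_of_mem_zpowers hm h.commutatorElement_mem h.commutatorElement_sq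
    fun hz => h.mul_pow_ne_one (by rw [h.mul_pow_orderOf_sq hm, hz, one_pow])

theorem pow_sq_right (h : IsCoverPair x y) (hm : orderOf (x ^ 2) = 2 * m) :
    (y ^ m) ^ 2 = (x ^ m) ^ 2 := by
  rw [← pow_mul, mul_comm, ← hm, h.pow_orderOf_sq_right hm, ← pow_mul, ← pow_mul, mul_comm]

theorem pow_mul_pow (h : IsCoverPair x y) (hm : orderOf (x ^ 2) = 2 * m) :
    x ^ m * y ^ m = y ^ m * (x ^ m)⁻¹ := by
  obtain ⟨l, rfl⟩ := h.odd_of_orderOf_sq_eq hm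
  set i := x ^ (2 * l + 1)
  have hi2 : i ^ 2 = (x ^ 2) ^ (2 * l + 1) := by rw [← pow_mul, mul_comm, pow_mul]
  have hi2D : i ^ 2 ∈ zpowers (x ^ 2) := hi2 ▸ npow_mem_zpowers _ _
  have hcomm : ⁅i, y ^ (2 * l + 1)⁆ = i ^ 2 := by
    rw [commutatorElement_pow_pow (h.commute _ h.commutatorElement_mem x)
      (h.commute _ h.commutatorElement_mem y),
      show (2 * l + 1) * (2 * l + 1) = 2 * (2 * l * l + 2 * l) + 1 by ring, pow_succ, pow_mul,
      h.commutatorElement_sq, one_pow, one_mul, hi2, h.commutatorElement_eq_of_orderOf_sq_eq hm]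
  have hi3 : i ^ 2 * i = i⁻¹ := eq_inv_of_mul_eq_one_left (by
    rw [← pow_succ, ← pow_succ]; exact pow_pow_four_eq_one hm)
  calc i * y ^ (2 * l + 1) = ⁅i, y ^ (2 * l + 1)⁆ * y ^ (2 * l + 1) * i := by
        rw [commutatorElement_def]; group
    _ = y ^ (2 * l + 1) * (i ^ 2 * i) := by
        rw [hcomm, (h.commute _ hi2D _).eq, mul_assoc]
    _ = y ^ (2 * l + 1) * i⁻¹ := by rw [hi3]

theorem nonempty_mulEquiv_quaternionGroup_prod [Finite G] (h : IsCoverPair x y)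
    (hm : orderOf (x ^ 2) = 2 * m) :
    Nonempty (G ≃* QuaternionGroup 2 × Multiplicative (ZMod m)) := by
  obtain ⟨l, hl⟩ := h.odd_of_orderOf_sq_eq hm
  have : NeZero m := ⟨by omega⟩
  set f := QuaternionGroup.lift _ _ (pow_pow_four_eq_one hm) (h.pow_sq_right hm)
    (h.pow_mul_pow hm)
  have hx4 : (x ^ 4) ^ m = 1 := by
    rw [← pow_mul, mul_comm, pow_mul]
    exact pow_pow_four_eq_one hm
  set g := zmodPowersHom (x ^ 4) m hx4
  have hx4D : x ^ 4 ∈ zpowers (x ^ 2) := by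
    rw [show x ^ 4 = (x ^ 2) ^ 2 by rw [← pow_mul]]
    exact npow_mem_zpowers _ 2
  -- `x` is recovered from `x ^ m` and `x ^ 4` because `m * m ≡ 1 [MOD 4]`.
  have hx : x ∈ f.range ⊔ g.range := by
    have hx' : x = (x ^ m) ^ m * ((x ^ 4) ^ (l * l + l))⁻¹ := by
      rw [← pow_mul, ← pow_mul, eq_mul_inv_iff_mul_eq, ← pow_succ', hl]
      ring_nf
    rw [hx']
    exact mul_mem (pow_mem (mem_sup_left (MonoidHom.mem_range.mpr
      ⟨_, QuaternionGroup.lift_a_one _ _ _ _ _⟩)) m) (inv_mem (pow_mem (mem_sup_right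
      (MonoidHom.mem_range.mpr ⟨_, zmodPowersHom_ofAdd_one _ _ _⟩)) _))
  refine nonempty_mulEquiv_prod_of_card_eq f g (fun t k => ?_) (h.eq_top _ hx ?_) ?_
  · exact (h.commute _ (zpowers_le.mpr hx4D ((range_zmodPowersHom _ _ _).le ⟨k, rfl⟩)) _).symm
  · rw [eq_pow_mul_inv_sq_pow hl y]
    exact mul_mem (mem_sup_left (MonoidHom.mem_range.mpr
      ⟨_, QuaternionGroup.lift_xa_zero _ _ _ _ _⟩))
      (inv_mem (pow_mem (zpowers_le.mpr (zpowers_le.mpr hx (npow_mem_zpowers x 2)) h.sq_mem) l))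
  · simp only [h.card_eq, Nat.card_eq_fintype_card, QuaternionGroup.card,
      Fintype.card_multiplicative, ZMod.card, hm]
    ring

end Quaternion

end IsCoverPair

end CoverPair

section Union

def IsUnionOfThreeProperCyclic (G : Type*) [Group G] : Prop :=
  ∃ A B C : Subgroup G, IsCyclic A ∧ IsCyclic B ∧ IsCyclic C ∧
    A ≠ ⊤ ∧ B ≠ ⊤ ∧ C ≠ ⊤ ∧ ∀ g : G, g ∈ A ∨ g ∈ B ∨ g ∈ C

variable {G H K : Type*} [Group G] [Group H] [Group K]

namespace IsUnionOfThreeProperCyclic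

theorem exists_odd_nonempty_mulEquiv [Finite G] (h : IsUnionOfThreeProperCyclic G) :
    ∃ k : ℕ, Odd k ∧
      (Nonempty (G ≃* Multiplicative (ZMod 2 × ZMod 2) × Multiplicative (ZMod k)) ∨
        Nonempty (G ≃* QuaternionGroup 2 × Multiplicative (ZMod k))) := by
  obtain ⟨A, B, C, hA, hB, hC, hAt, hBt, hCt, hcov⟩ := h
  obtain ⟨x, rfl⟩ := A.isCyclic_iff_exists_zpowers_eq_top.mp hA
  obtain ⟨y, rfl⟩ := B.isCyclic_iff_exists_zpowers_eq_top.mp hB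
  obtain ⟨c, rfl⟩ := C.isCyclic_iff_exists_zpowers_eq_top.mp hC
  have h := (IsProperTripleCover.mk hAt hBt hCt hcov).isCoverPair
  obtain ⟨m, hm | hm⟩ := Nat.even_or_odd' (orderOf (x ^ 2))
  · exact ⟨m, h.odd_of_orderOf_sq_eq hm, .inr (h.nonempty_mulEquiv_quaternionGroup_prod hm)⟩
  · exact ⟨_, ⟨m, hm⟩, .inl (h.nonempty_mulEquiv_kleinFour_prod ⟨m, hm⟩)⟩

theorem of_mulEquiv (e : G ≃* H) (h : IsUnionOfThreeProperCyclic H) :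
    IsUnionOfThreeProperCyclic G := by
  obtain ⟨A, B, C, hA, hB, hC, hAt, hBt, hCt, hcov⟩ := h
  have cyclic (S : Subgroup H) [IsCyclic S] : IsCyclic (S.comap (e : G →* H)) := by
    rw [comap_equiv_eq_map_symm]
    exact isCyclic_of_surjective _ (MonoidHom.subgroupMap_surjective _ S)
  have ne_top (S : Subgroup H) (hS : S ≠ ⊤) : S.comap (e : G →* H) ≠ ⊤ := fun h =>
    hS ((eq_top_iff' _).mpr fun x => by simpa using (eq_top_iff' _).mp h (e.symm x))
  exact ⟨_, _, _, cyclic A, cyclic B, cyclic C, ne_top A hAt, ne_top B hBt, ne_top C hCt,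
    fun g => hcov (e g)⟩

theorem prod_of_coprime [IsCyclic K] (h : IsUnionOfThreeProperCyclic H)
    (hcop : (Nat.card H).Coprime (Nat.card K)) : IsUnionOfThreeProperCyclic (H × K) := by
  obtain ⟨A, B, C, hA, hB, hC, hAt, hBt, hCt, hcov⟩ := h
  have cyclic (S : Subgroup H) [IsCyclic S] : IsCyclic (S.prod (⊤ : Subgroup K)) := by
    rw [(S.prodEquiv ⊤).isCyclic, Group.isCyclic_prod_iff, card_top]
    exact ⟨‹_›, topEquiv.isCyclic.mpr ‹_›, hcop.coprime_dvd_left (card_subgroup_dvd_card S)⟩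
  have ne_top (S : Subgroup H) (hS : S ≠ ⊤) : S.prod (⊤ : Subgroup K) ≠ ⊤ := fun h =>
    hS ((eq_top_iff' _).mpr fun x => (mem_prod.mp ((eq_top_iff' _).mp h (x, 1))).1)
  refine ⟨_, _, _, cyclic A, cyclic B, cyclic C, ne_top A hAt, ne_top B hBt, ne_top C hCt,
    fun g => ?_⟩
  simpa [mem_prod] using hcov g.1

end IsUnionOfThreeProperCyclic

theorem zpowers_ne_top_of_orderOf_lt {g : G} (h : orderOf g < Nat.card G) : zpowers g ≠ ⊤ :=
  fun htop => h.ne (by rw [← Nat.card_zpowers, htop, card_top])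

theorem isUnionOfThreeProperCyclic_kleinFour :
    IsUnionOfThreeProperCyclic (Multiplicative (ZMod 2 × ZMod 2)) := by
  have hord (g : Multiplicative (ZMod 2 × ZMod 2)) (hg : g ≠ 1) :
      orderOf g < Nat.card (Multiplicative (ZMod 2 × ZMod 2)) := by
    have hsq : g ^ 2 = 1 := by revert g; decide
    rw [orderOf_eq_prime hsq hg]
    simp [Nat.card_eq_fintype_card]
  have hcov : ∀ g : Multiplicative (ZMod 2 × ZMod 2),
      g = 1 ∨ g = ofAdd (1, 0) ∨ g = ofAdd (0, 1) ∨ g = ofAdd (1, 1) := by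
    decide
  refine ⟨_, _, _, isCyclic_zpowers (ofAdd (1, 0)), isCyclic_zpowers (ofAdd (0, 1)),
    isCyclic_zpowers (ofAdd (1, 1)), zpowers_ne_top_of_orderOf_lt (hord _ (by decide)),
    zpowers_ne_top_of_orderOf_lt (hord _ (by decide)),
    zpowers_ne_top_of_orderOf_lt (hord _ (by decide)), fun g => ?_⟩
  rcases hcov g with rfl | rfl | rfl | rfl
  exacts [.inl (one_mem _), .inl (mem_zpowers _), .inr (.inl (mem_zpowers _)),
    .inr (.inr (mem_zpowers _))]

open QuaternionGroup in
theorem isUnionOfThreeProperCyclic_quaternionGroup :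
    IsUnionOfThreeProperCyclic (QuaternionGroup 2) := by
  have hcard : Nat.card (QuaternionGroup 2) = 8 := by
    rw [Nat.card_eq_fintype_card, QuaternionGroup.card]
  have hcov : ∀ g : QuaternionGroup 2, (∃ k : Fin 4, a 1 ^ (k : ℕ) = g) ∨
      (∃ k : Fin 4, xa 0 ^ (k : ℕ) = g) ∨ (∃ k : Fin 4, xa 1 ^ (k : ℕ) = g) := by
    decide
  refine ⟨_, _, _, isCyclic_zpowers (a 1), isCyclic_zpowers (xa 0), isCyclic_zpowers (xa 1),
    zpowers_ne_top_of_orderOf_lt ?_, zpowers_ne_top_of_orderOf_lt ?_,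
    zpowers_ne_top_of_orderOf_lt ?_, fun g => ?_⟩
  · rw [orderOf_a_one, hcard]; norm_num
  · rw [orderOf_xa, hcard]; norm_num
  · rw [orderOf_xa, hcard]; norm_num
  · rcases hcov g with ⟨k, rfl⟩ | ⟨k, rfl⟩ | ⟨k, rfl⟩
    exacts [.inl (npow_mem_zpowers _ _), .inr (.inl (npow_mem_zpowers _ _)),
      .inr (.inr (npow_mem_zpowers _ _))]

end Union

/-- A finite group `G` is the set-theoretic union of three proper cyclic
subgroups if and only if `G ≅ T × Z_k` with `k` odd and `T` the Klein four-group or the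
quaternion group `Q₈` (realized as `QuaternionGroup 2`). -/
theorem stmt_9 {G : Type*} [Group G] [Fintype G] :
    (∃ A B C : Subgroup G, IsCyclic A ∧ IsCyclic B ∧ IsCyclic C ∧
      A ≠ ⊤ ∧ B ≠ ⊤ ∧ C ≠ ⊤ ∧ ∀ g : G, g ∈ A ∨ g ∈ B ∨ g ∈ C) ↔
    (∃ k : ℕ, Odd k ∧
      (Nonempty (G ≃* Multiplicative (ZMod 2 × ZMod 2) × Multiplicative (ZMod k)) ∨
       Nonempty (G ≃* QuaternionGroup 2 × Multiplicative (ZMod k)))) := by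
  refine ⟨IsUnionOfThreeProperCyclic.exists_odd_nonempty_mulEquiv, ?_⟩
  rintro ⟨k, hk, ⟨⟨e⟩⟩ | ⟨⟨e⟩⟩⟩ <;> have : NeZero k := ⟨hk.pos.ne'⟩
  · refine (isUnionOfThreeProperCyclic_kleinFour.prod_of_coprime ?_).of_mulEquiv e
    simpa [Nat.card_eq_fintype_card] using (Nat.coprime_two_left.mpr hk).pow_left 2
  · refine (isUnionOfThreeProperCyclic_quaternionGroup.prod_of_coprime ?_).of_mulEquiv e
    simpa [Nat.card_eq_fintype_card, QuaternionGroup.card] using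
      (Nat.coprime_two_left.mpr hk).pow_left 3
end

section
/- For every even integer n ≥ 2 there exists a finite group G of order 8n together with elements x, y, z ∈ G of orders 2, 4, 4n respectively, such that x, y, z generate G, xyz = 1, y²z^{2n} = 1, and every element of G is conjugate in G to a power of x, y, or z. (In other words, for every even n ≥ 2 there is a gpnf-group of type (2,4,4n) of order 8n.) -/
/-- A witness that there is a gpnf-group of type `(2,4,4n)` of order `8n` satisfying the
extra relation `y² z^{2n} = 1`. -/
structure GpnfWitness24 (n : ℕ) where
  G : Type
  [grp : Group G]
  [fin : Fintype G]
  x : G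
  y : G
  z : G
  card_eq : Fintype.card G = 8 * n
  order_x : orderOf x = 2
  order_y : orderOf y = 4
  order_z : orderOf z = 4 * n
  gen : Subgroup.closure ({x, y, z} : Set G) = ⊤
  prod_eq : x * y * z = 1
  rel : y ^ 2 * z ^ (2 * n) = 1
  gpnf : ∀ g : G, (∃ k : ℕ, IsConj (x ^ k) g) ∨ (∃ k : ℕ, IsConj (y ^ k) g) ∨
    (∃ k : ℕ, IsConj (z ^ k) g)

namespace Stmt14

/-- The underlying set of our group of order `8n`. -/
@[ext]
structure GG (n : ℕ) where
  a : ZMod (4 * n)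
  e : ZMod 2

variable {n : ℕ}

/-- The twist: multiplication by `2n - 1` (an involution mod `4n`). -/
def r (n : ℕ) : ZMod (4 * n) := 2 * (n : ZMod (4 * n)) - 1

/-- `u e` is `1` or `r n` according to `e`. -/
def u (n : ℕ) (e : ZMod 2) : ZMod (4 * n) := if e = 0 then 1 else r n

lemma four_n_cast : (4 : ZMod (4 * n)) * (n : ZMod (4 * n)) = 0 := by
  have h := ZMod.natCast_self (4 * n)
  push_cast at h
  exact h

lemma r_sq : r n * r n = 1 := by
  have h := four_n_cast (n := n)
  unfold r
  linear_combination ((n : ZMod (4 * n)) - 1) * h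

lemma zmod2_cases (e : ZMod 2) : e = 0 ∨ e = 1 := by revert e; decide

lemma u_add (d e : ZMod 2) : u n (d + e) = u n d * u n e := by
  have hr := r_sq (n := n)
  have h11 : (1 : ZMod 2) + 1 = 0 := rfl
  have h10 : (1 : ZMod 2) ≠ 0 := by decide
  rcases zmod2_cases d with h | h <;> rcases zmod2_cases e with h' | h' <;>
    subst h <;> subst h' <;> simp [u, h11, h10, hr]

instance : Group (GG n) where
  mul g h := ⟨g.a + u n g.e * h.a, g.e + h.e⟩
  one := ⟨0, 0⟩
  inv g := ⟨-(u n g.e * g.a), g.e⟩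
  mul_assoc g h k := by
    ext
    · show (g.a + u n g.e * h.a) + u n (g.e + h.e) * k.a
        = g.a + u n g.e * (h.a + u n h.e * k.a)
      rw [u_add]; ring
    · exact add_assoc _ _ _
  one_mul g := by
    ext
    · show (0 : ZMod (4 * n)) + u n 0 * g.a = g.a
      simp [u]
    · exact zero_add _
  mul_one g := by
    ext
    · show g.a + u n g.e * 0 = g.a
      simp
    · exact add_zero _
  inv_mul_cancel g := by
    have he : g.e + g.e = 0 := by
      rcases zmod2_cases g.e with h | h <;> rw [h] <;> rfl
    ext
    · show -(u n g.e * g.a) + u n g.e * g.a = 0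
      ring
    · exact he

lemma mul_def (g h : GG n) : g * h = ⟨g.a + u n g.e * h.a, g.e + h.e⟩ := rfl
lemma one_def : (1 : GG n) = ⟨0, 0⟩ := rfl
lemma inv_def (g : GG n) : g⁻¹ = ⟨-(u n g.e * g.a), g.e⟩ := rfl

/-- the generators -/
def X (n : ℕ) : GG n := ⟨0, 1⟩
def Y (n : ℕ) : GG n := ⟨1 - 2 * n, 1⟩
def Z (n : ℕ) : GG n := ⟨1, 0⟩

lemma Z_pow (k : ℕ) : (Z n) ^ k = ⟨(k : ZMod (4 * n)), 0⟩ := by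
  induction k with
  | zero => simp [one_def]
  | succ m ih =>
      rw [pow_succ, ih, mul_def]
      ext <;> simp [Z, u]

lemma u_one : u n 1 = r n := by simp [u]
lemma u_zero : u n 0 = 1 := by simp [u]

section main
variable [NeZero n]

instance : NeZero (4 * n) := ⟨by have := NeZero.ne n; omega⟩

def equivProd : GG n ≃ ZMod (4 * n) × ZMod 2 where
  toFun g := (g.a, g.e)
  invFun p := ⟨p.1, p.2⟩
  left_inv _ := rfl
  right_inv _ := rfl

instance : Fintype (GG n) := Fintype.ofEquiv _ (equivProd (n := n)).symm

lemma card_GG : Fintype.card (GG n) = 8 * n := by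
  rw [Fintype.card_congr (equivProd (n := n)), Fintype.card_prod, ZMod.card, ZMod.card]
  ring

lemma order_Z : orderOf (Z n) = 4 * n := by
  have h1 : (Z n) ^ (4 * n) = 1 := by
    rw [Z_pow, one_def]
    ext <;> simp
  have h2 : orderOf (Z n) ∣ 4 * n := orderOf_dvd_of_pow_eq_one h1
  have h3 : (Z n) ^ (orderOf (Z n)) = 1 := pow_orderOf_eq_one _
  rw [Z_pow, one_def] at h3
  have h4 : ((orderOf (Z n) : ℕ) : ZMod (4 * n)) = 0 := congrArg GG.a h3
  have h5 : 4 * n ∣ orderOf (Z n) := (ZMod.natCast_eq_zero_iff _ _).mp h4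
  exact Nat.dvd_antisymm h2 h5

lemma two_n_ne_zero (hn : 2 ≤ n) : (2 * (n : ZMod (4 * n)) : ZMod (4 * n)) ≠ 0 := by
  intro h
  have : ((2 * n : ℕ) : ZMod (4 * n)) = 0 := by push_cast; exact h
  have hd : 4 * n ∣ 2 * n := (ZMod.natCast_eq_zero_iff _ _).mp this
  have := Nat.le_of_dvd (by omega) hd
  omega

lemma Y_sq : (Y n) ^ 2 = ⟨2 * (n : ZMod (4 * n)), 0⟩ := by
  have h := four_n_cast (n := n)
  rw [pow_two, mul_def]
  ext
  · show (1 - 2 * (n : ZMod (4*n))) + u n 1 * (1 - 2 * n) = 2 * n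
    rw [u_one]; unfold r
    linear_combination (-(n : ZMod (4 * n))) * h
  · show (1 : ZMod 2) + 1 = 0
    rfl

lemma order_Y (hn : 2 ≤ n) : orderOf (Y n) = 4 := by
  have h4 := four_n_cast (n := n)
  have hsq : (Y n) ^ 2 ≠ 1 := by
    rw [Y_sq, one_def]
    intro h
    exact two_n_ne_zero hn (congrArg GG.a h)
  have hfour : (Y n) ^ 4 = 1 := by
    have : (Y n) ^ 4 = ((Y n) ^ 2) ^ 2 := by rw [← pow_mul]
    rw [this, Y_sq, pow_two, mul_def, one_def]
    ext
    · show 2 * (n : ZMod (4*n)) + u n 0 * (2 * n) = 0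
      rw [u_zero]
      linear_combination h4
    · show (0 : ZMod 2) + 0 = 0
      rfl
  haveI : Fact (Nat.Prime 2) := ⟨Nat.prime_two⟩
  have := orderOf_eq_prime_pow (x := Y n) (p := 2) (n := 1)
    (by norm_num; exact hsq) (by norm_num; exact hfour)
  simpa using this
lemma order_X (hn : 2 ≤ n) : orderOf (X n) = 2 := by
  apply orderOf_eq_prime
  · rw [pow_two, mul_def, one_def]
    ext
    · show (0 : ZMod (4*n)) + u n 1 * 0 = 0
      ring
    · show (1 : ZMod 2) + 1 = 0
      rfl
  · intro h
    have := congrArg GG.e h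
    simp [X, one_def] at this

lemma prod_XYZ : X n * Y n * Z n = 1 := by
  have h4 := four_n_cast (n := n)
  rw [mul_def, mul_def, one_def]
  ext
  · show ((0 : ZMod (4*n)) + u n 1 * (1 - 2 * n)) + u n (1 + 1) * 1 = 0
    have : ((1 : ZMod 2) + 1) = 0 := rfl
    rw [this, u_one, u_zero]; unfold r
    linear_combination (1 - (n : ZMod (4 * n))) * h4
  · show ((1 : ZMod 2) + 1) + 0 = 0
    rfl

lemma rel_YZ : (Y n) ^ 2 * (Z n) ^ (2 * n) = 1 := by
  have h4 := four_n_cast (n := n)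
  rw [Y_sq, Z_pow, mul_def, one_def]
  ext
  · show 2 * (n : ZMod (4*n)) + u n 0 * ((2 * n : ℕ) : ZMod (4*n)) = 0
    rw [u_zero]; push_cast
    linear_combination h4
  · show (0 : ZMod 2) + 0 = 0
    rfl

lemma decomp (g : GG n) : g = (Z n) ^ (g.a.val) * (X n) ^ (g.e.val) := by
  rw [Z_pow]
  have hval : ((g.a.val : ℕ) : ZMod (4 * n)) = g.a := by simp
  rcases zmod2_cases g.e with h | h
  · have : g.e.val = 0 := by rw [h]; rfl
    rw [this, pow_zero, mul_one]
    ext <;> simp [hval, h]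
  · have : g.e.val = 1 := by rw [h]; rfl
    rw [this, pow_one, mul_def]
    ext
    · show g.a = ((g.a.val : ℕ) : ZMod (4*n)) + u n 0 * (X n).a
      rw [u_zero, hval]; simp [X]
    · show g.e = 0 + (X n).e
      rw [h]; rfl

lemma gen_GG : Subgroup.closure ({X n, Y n, Z n} : Set (GG n)) = ⊤ := by
  rw [eq_top_iff]
  intro g _
  rw [decomp g]
  have hx : X n ∈ Subgroup.closure ({X n, Y n, Z n} : Set (GG n)) :=
    Subgroup.subset_closure (by simp)
  have hz : Z n ∈ Subgroup.closure ({X n, Y n, Z n} : Set (GG n)) :=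
    Subgroup.subset_closure (by simp)
  exact mul_mem (pow_mem hz _) (pow_mem hx _)

lemma unit_exists (hn : 2 ≤ n) (hev : Even n) :
    ∃ w : ZMod (4 * n), ((n : ZMod (4 * n)) - 1) * w = 1 := by
  have hodd : Odd (n - 1) := Nat.Even.sub_odd (by omega) hev (by norm_num)
  have h2 : Nat.Coprime (n - 1) 4 := by
    have : (4 : ℕ) = 2 ^ 2 := rfl
    rw [this]
    exact Nat.Coprime.pow_right 2 (Nat.coprime_two_right.mpr hodd)
  have h1 : Nat.Coprime (n - 1) n := by
    have h : n = (n - 1) + 1 := by omega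
    rw [h]
    simp [Nat.add_comm, Nat.coprime_add_self_right]
  have hcop : Nat.Coprime (n - 1) (4 * n) := Nat.Coprime.mul_right h2 h1
  have hu : IsUnit (((n - 1 : ℕ) : ZMod (4 * n))) :=
    (ZMod.isUnit_iff_coprime _ _).mpr hcop
  obtain ⟨w, hw⟩ := hu
  refine ⟨(↑w⁻¹ : ZMod (4 * n)), ?_⟩
  have hcast : (((n - 1 : ℕ) : ZMod (4 * n))) = (n : ZMod (4 * n)) - 1 := by
    push_cast [Nat.cast_sub (by omega : 1 ≤ n)]
    ring
  rw [← hcast, ← hw]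
  exact w.mul_inv

/-- conjugation of an `e = 1` element by a power of `Z`. -/
lemma conj_formula (j a : ZMod (4 * n)) :
    (⟨j, 0⟩ : GG n) * ⟨a, 1⟩ * (⟨j, 0⟩ : GG n)⁻¹
      = ⟨a + (2 - 2 * n) * j, 1⟩ := by
  rw [inv_def, mul_def, mul_def]
  ext
  · show (j + u n 0 * a) + u n (0 + 1) * -(u n 0 * j) = a + (2 - 2 * (n : ZMod (4*n))) * j
    have h01 : ((0 : ZMod 2) + 1) = 1 := rfl
    rw [h01, u_zero, u_one]; unfold r
    ring
  · show ((0 : ZMod 2) + 1) + 0 = 1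
    rfl

lemma gpnf_GG (hn : 2 ≤ n) (hev : Even n) (g : GG n) :
    (∃ k : ℕ, IsConj ((X n) ^ k) g) ∨ (∃ k : ℕ, IsConj ((Y n) ^ k) g) ∨
      (∃ k : ℕ, IsConj ((Z n) ^ k) g) := by
  obtain ⟨w, hw⟩ := unit_exists (n := n) hn hev
  rcases zmod2_cases g.e with he | he
  · right; right
    exact ⟨g.a.val, by
      rw [Z_pow]
      have : (⟨((g.a.val : ℕ) : ZMod (4*n)), 0⟩ : GG n) = g := by
        ext <;> simp [he]
      rw [this]⟩
  · have hg : g = ⟨g.a, 1⟩ := by ext <;> simp [he]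
    rcases Nat.even_or_odd g.a.val with hpar | hpar
    · -- conjugate to X
      left
      obtain ⟨m, hm⟩ := hpar
      set t : ZMod (4 * n) := (m : ZMod (4 * n)) with ht
      have hat : g.a = 2 * t := by
        have : ((g.a.val : ℕ) : ZMod (4 * n)) = g.a := by simp
        rw [← this, hm]; push_cast; ring
      refine ⟨1, ?_⟩
      rw [pow_one, isConj_iff]
      refine ⟨⟨-(w * t), 0⟩, ?_⟩
      have hX : X n = (⟨0, 1⟩ : GG n) := rfl
      rw [hX, conj_formula, hg]
      ext
      · show (0 : ZMod (4*n)) + (2 - 2 * n) * -(w * t) = g.a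
        rw [hat]
        linear_combination 2 * t * hw
      · rfl
    · -- conjugate to Y
      right; left
      obtain ⟨m, hm⟩ := hpar
      set t : ZMod (4 * n) := (m : ZMod (4 * n)) with ht
      have hat : g.a = 2 * t + 1 := by
        have : ((g.a.val : ℕ) : ZMod (4 * n)) = g.a := by simp
        rw [← this, hm]; push_cast; ring
      refine ⟨1, ?_⟩
      rw [pow_one, isConj_iff]
      refine ⟨⟨-(w * (t + n)), 0⟩, ?_⟩
      have hY : Y n = (⟨1 - 2 * n, 1⟩ : GG n) := rfl
      rw [hY, conj_formula, hg]
      have h4 := four_n_cast (n := n)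
      ext
      · show (1 - 2 * (n : ZMod (4*n))) + (2 - 2 * n) * -(w * (t + n)) = g.a
        rw [hat]
        linear_combination 2 * (t + (n : ZMod (4*n))) * hw
      · rfl

def witness (hn : 2 ≤ n) (hev : Even n) : GpnfWitness24 n where
  G := GG n
  x := X n
  y := Y n
  z := Z n
  card_eq := card_GG
  order_x := order_X hn
  order_y := order_Y hn
  order_z := order_Z
  gen := gen_GG
  prod_eq := prod_XYZ
  rel := rel_YZ
  gpnf := gpnf_GG hn hev

end main

end Stmt14

/-- For every even `n ≥ 2` there exists a finite group of order `8n` which is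
a gpnf-group of type `(2,4,4n)` with generators `x, y, z` satisfying `xyz = 1` and
`y² z^{2n} = 1`. -/
theorem stmt_14 (n : ℕ) (hn : 2 ≤ n) (hev : Even n) : Nonempty (GpnfWitness24 n) := by
  haveI : NeZero n := ⟨by omega⟩
  exact ⟨Stmt14.witness hn hev⟩
end

section
/- Let n ≥ 1 be an odd integer and let G be a finite group of order 8n generated by elements x, y, z satisfying x² = 1, y⁴ = 1, z^{4n} = 1, xyz = 1, and y²z^{2n} = 1. Then G is not a gpnf-group with respect to x, y, z: there exists an element of G that is not conjugate in G to any power of x, y, or z. -/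
/-- Let `n ≥ 1` be odd and let `G` be a finite group of order `8n` generated
by `x, y, z` with `x² = 1`, `y⁴ = 1`, `z^{4n} = 1`, `xyz = 1` and `y² z^{2n} = 1`. Then `G`
is not a gpnf-group with respect to `x, y, z`: some element of `G` is not conjugate to any
power of `x`, `y` or `z`. -/
theorem stmt_15 (n : ℕ) (hn : 1 ≤ n) (hodd : Odd n)
    {G : Type*} [Group G] [Fintype G] (hcard : Fintype.card G = 8 * n)
    (x y z : G)
    (hgen : Subgroup.closure ({x, y, z} : Set G) = ⊤)
    (hx : x ^ 2 = 1) (hy : y ^ 4 = 1) (hz : z ^ (4 * n) = 1)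
    (hprod : x * y * z = 1) (hrel : y ^ 2 * z ^ (2 * n) = 1) :
    ∃ w : G, (∀ k : ℕ, ¬ IsConj (x ^ k) w) ∧ (∀ k : ℕ, ¬ IsConj (y ^ k) w) ∧
      (∀ k : ℕ, ¬ IsConj (z ^ k) w) := by
  obtain ⟨j, hj⟩ := hodd
  have hjz : (n : ℤ) = 2 * (j : ℤ) + 1 := by exact_mod_cast hj
  set s : ℤ := -(2*(n:ℤ)) - 1 with hs
  have hxx : x * x = 1 := by rw [← sq]; exact hx
  have hxinv : x⁻¹ = x := inv_eq_of_mul_eq_one_right hxx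
  have hyz : y * z = x := by
    have h : x * (y * z) = 1 := by rw [← mul_assoc]; exact hprod
    rw [← hxinv]; exact (inv_eq_of_mul_eq_one_right h).symm
  have hy2 : y ^ 2 = z ^ (-(2*(n:ℤ))) := by
    have h : y ^ 2 = (z ^ (2*n))⁻¹ := eq_inv_of_mul_eq_one_left hrel
    rw [h, ← zpow_natCast, ← zpow_neg]
    norm_num
  have hz4 : z ^ (4*(n:ℤ)) = 1 := by
    rw [show (4*(n:ℤ)) = ((4*n : ℕ) : ℤ) by push_cast; ring, zpow_natCast]
    exact hz
  have hyinv : y⁻¹ = y * z ^ (-(2*(n:ℤ))) := by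
    have h : y * (y * z ^ (-(2*(n:ℤ)))) = 1 := by
      rw [← mul_assoc, ← sq, hy2, ← zpow_add,
        show -(2*(n:ℤ)) + -(2*(n:ℤ)) = -(4*(n:ℤ)) by ring, zpow_neg, hz4, inv_one]
    exact inv_eq_of_mul_eq_one_right h
  have hzy : z * y = y * z ^ s := by
    have h0 : y * z * (y * z) = 1 := by rw [hyz]; exact hxx
    have h1 : z * y = y⁻¹ * z⁻¹ := by
      have := congrArg (fun g => y⁻¹ * g * z⁻¹) h0
      simpa [mul_assoc] using this
    rw [h1, hyinv, mul_assoc, ← zpow_neg_one, ← zpow_add,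
      show -(2*(n:ℤ)) + -1 = s by rw [hs]; ring]
  have hconj : y⁻¹ * z * y = z ^ s := by
    calc y⁻¹ * z * y = y⁻¹ * (z * y) := by rw [mul_assoc]
    _ = z ^ s := by rw [hzy, ← mul_assoc, inv_mul_cancel, one_mul]
  have hpow : ∀ m : ℤ, y⁻¹ * z ^ m * y = z ^ (s*m) := by
    intro m
    rw [zpow_mul, ← hconj]
    have : y⁻¹ * z * y = y⁻¹ * z * (y⁻¹)⁻¹ := by rw [inv_inv]
    rw [this, conj_zpow, inv_inv]
  have h1 : ∀ m : ℤ, z ^ m * y = y * z ^ (s*m) := by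
    intro m
    calc z ^ m * y = y * (y⁻¹ * z ^ m * y) := by group
    _ = y * z ^ (s*m) := by rw [hpow m]
  have h2 : ∀ m : ℤ, y * z ^ m * y⁻¹ = z ^ (s*m) := by
    intro m
    calc y * z ^ m * y⁻¹ = y * (z ^ m * y) * (y * y) ⁻¹ := by group
    _ = y * (y * z ^ (s*m)) * (y^2)⁻¹ := by rw [h1 m, sq]
    _ = y^2 * z ^ (s*m) * (y^2)⁻¹ := by rw [sq]; group
    _ = z ^ (-(2*(n:ℤ))) * z ^ (s*m) * (z ^ (-(2*(n:ℤ))))⁻¹ := by rw [hy2]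
    _ = z ^ (s*m) := by rw [← zpow_neg, ← zpow_add, ← zpow_add]; ring_nf
  -- decomposition
  let S : Subgroup G :=
    { carrier := {g | (∃ m : ℤ, g = z ^ m) ∨ ∃ m : ℤ, g = y * z ^ m}
      one_mem' := Or.inl ⟨0, (zpow_zero z).symm⟩
      mul_mem' := by
        rintro a b (⟨m, rfl⟩ | ⟨m, rfl⟩) (⟨k, rfl⟩ | ⟨k, rfl⟩)
        · exact Or.inl ⟨m + k, by rw [zpow_add]⟩
        · refine Or.inr ⟨s*m + k, ?_⟩
          rw [← mul_assoc, h1 m, mul_assoc, ← zpow_add]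
        · exact Or.inr ⟨m + k, by rw [mul_assoc, ← zpow_add]⟩
        · refine Or.inl ⟨-(2*(n:ℤ)) + (s*m + k), ?_⟩
          calc y * z ^ m * (y * z ^ k) = y * (z ^ m * y) * z ^ k := by group
          _ = y^2 * z ^ (s*m + k) := by rw [h1 m, sq]; group
          _ = z ^ (-(2*(n:ℤ)) + (s*m + k)) := by rw [hy2, ← zpow_add]
      inv_mem' := by
        rintro a (⟨m, rfl⟩ | ⟨m, rfl⟩)
        · exact Or.inl ⟨-m, by rw [zpow_neg]⟩
        · refine Or.inr ⟨s*(-m) + -(2*(n:ℤ)), ?_⟩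
          calc (y * z ^ m)⁻¹ = z ^ (-m) * y⁻¹ := by group
          _ = z ^ (-m) * y * z ^ (-(2*(n:ℤ))) := by rw [hyinv]; group
          _ = y * z ^ (s*(-m)) * z ^ (-(2*(n:ℤ))) := by rw [h1 (-m)]
          _ = y * z ^ (s*(-m) + -(2*(n:ℤ))) := by rw [mul_assoc, ← zpow_add] }
  have hxS : x = y * z ^ (1:ℤ) := by rw [zpow_one, hyz]
  have hdecomp : ∀ g : G, (∃ m : ℤ, g = z ^ m) ∨ ∃ m : ℤ, g = y * z ^ m := by
    intro g
    have hle : (⊤ : Subgroup G) ≤ S := by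
      rw [← hgen]
      refine (Subgroup.closure_le S).mpr ?_
      rintro g (h | h | h)
      · rw [h]; exact Or.inr ⟨1, hxS⟩
      · rw [h]; exact Or.inr ⟨0, by rw [zpow_zero, mul_one]⟩
      · rw [h]; exact Or.inl ⟨1, (zpow_one z).symm⟩
    exact hle (Subgroup.mem_top g)
  -- order of z
  have hnz : (0:ℤ) < 4*(n:ℤ) := by
    have : (1:ℤ) ≤ (n:ℤ) := by exact_mod_cast hn
    omega
  have hzmod : ∀ m : ℤ, z ^ m = z ^ ((m % (4*(n:ℤ))).toNat) := by
    intro m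
    conv_lhs => rw [← Int.mul_ediv_add_emod m (4*(n:ℤ))]
    rw [zpow_add, zpow_mul, hz4, one_zpow, one_mul, ← zpow_natCast,
      Int.toNat_of_nonneg (Int.emod_nonneg m (ne_of_gt hnz))]
  have hmodlt : ∀ m : ℤ, (m % (4*(n:ℤ))).toNat < 4*n := by
    intro m
    have h := Int.emod_lt_of_pos m hnz
    omega
  have hsurj : Function.Surjective
      (fun p : Fin 2 × Fin (4*n) => y ^ (p.1 : ℕ) * z ^ (p.2 : ℕ)) := by
    intro g
    rcases hdecomp g with ⟨m, rfl⟩ | ⟨m, rfl⟩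
    · refine ⟨(⟨0, by omega⟩, ⟨(m % (4*(n:ℤ))).toNat, hmodlt m⟩), ?_⟩
      simp [hzmod m]
    · refine ⟨(⟨1, by omega⟩, ⟨(m % (4*(n:ℤ))).toNat, hmodlt m⟩), ?_⟩
      simp [hzmod m]
  have hcards : Fintype.card (Fin 2 × Fin (4*n)) = Fintype.card G := by
    simp [hcard]; ring
  have hbij := (Fintype.bijective_iff_surjective_and_card _).mpr ⟨hsurj, hcards⟩
  have hordvd : orderOf z ∣ 4*n := orderOf_dvd_of_pow_eq_one hz
  have horder : orderOf z = 4*n := by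
    have hpos : 0 < orderOf z := orderOf_pos z
    have hle : orderOf z ≤ 4*n := Nat.le_of_dvd (by omega) hordvd
    by_contra hne
    have hlt : orderOf z < 4*n := lt_of_le_of_ne hle hne
    have he : (fun p : Fin 2 × Fin (4*n) => y ^ (p.1 : ℕ) * z ^ (p.2 : ℕ))
        (⟨0, by omega⟩, ⟨orderOf z, hlt⟩)
        = (fun p : Fin 2 × Fin (4*n) => y ^ (p.1 : ℕ) * z ^ (p.2 : ℕ))
        (⟨0, by omega⟩, ⟨0, by omega⟩) := by
      simp [pow_orderOf_eq_one]
    have := hbij.1 he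
    simp only [Prod.mk.injEq, Fin.mk.injEq] at this
    omega
  have hdvd4 : ∀ c : ℤ, z ^ c = 1 → (4:ℤ) ∣ c := by
    intro c hc
    have h := orderOf_dvd_iff_zpow_eq_one.mpr hc
    rw [horder] at h
    refine dvd_trans ⟨(n:ℤ), by push_cast; ring⟩ h
  have hyH : ∀ m : ℤ, y ≠ z ^ m := by
    intro m hy'
    have hle : (⊤ : Subgroup G) ≤ Subgroup.zpowers z := by
      rw [← hgen]
      refine (Subgroup.closure_le _).mpr ?_
      rintro g (h | h | h)
      · rw [h, hxS, hy', ← zpow_add]; exact Subgroup.zpow_mem _ (Subgroup.mem_zpowers z) _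
      · rw [h, hy']; exact Subgroup.zpow_mem _ (Subgroup.mem_zpowers z) _
      · rw [h]; exact Subgroup.mem_zpowers z
    have htop : Subgroup.zpowers z = ⊤ := eq_top_iff.mpr hle
    have hc1 : Nat.card (Subgroup.zpowers z) = orderOf z := Nat.card_zpowers z
    rw [htop, Subgroup.card_top, Nat.card_eq_fintype_card, hcard, horder] at hc1
    omega
  have zcond : ∀ a b : ℤ, z ^ a = z ^ b → (4:ℤ) ∣ b - a := by
    intro a b h
    refine hdvd4 _ ?_
    rw [zpow_sub, h, mul_inv_cancel]
  have ycond : ∀ a b : ℤ, y * z ^ a = y * z ^ b → (4:ℤ) ∣ b - a := by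
    intro a b h
    exact zcond a b (mul_left_cancel h)
  -- conjugation formulas
  have hconjzz : ∀ m t : ℤ, z ^ m * z ^ t * (z ^ m)⁻¹ = z ^ t := by
    intro m t; group
  have hconjyz : ∀ m t : ℤ, (y * z ^ m) * z ^ t * (y * z ^ m)⁻¹ = z ^ (s*t) := by
    intro m t
    calc (y * z ^ m) * z ^ t * (y * z ^ m)⁻¹ = y * (z ^ m * z ^ t * (z ^ m)⁻¹) * y⁻¹ := by group
    _ = y * z ^ t * y⁻¹ := by rw [hconjzz]
    _ = z ^ (s*t) := h2 t
  have hconjzy : ∀ m t : ℤ, z ^ m * (y * z ^ t) * (z ^ m)⁻¹ = y * z ^ (s*m + (t - m)) := by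
    intro m t
    calc z ^ m * (y * z ^ t) * (z ^ m)⁻¹ = (z ^ m * y) * z ^ (t - m) := by
          rw [zpow_sub]; group
    _ = y * z ^ (s*m) * z ^ (t - m) := by rw [h1 m]
    _ = y * z ^ (s*m + (t - m)) := by rw [mul_assoc, ← zpow_add]
  have hconjyy : ∀ m t : ℤ, (y * z ^ m) * (y * z ^ t) * (y * z ^ m)⁻¹
      = y * z ^ (s*(s*m + (t - m))) := by
    intro m t
    calc (y * z ^ m) * (y * z ^ t) * (y * z ^ m)⁻¹
        = y * (z ^ m * (y * z ^ t) * (z ^ m)⁻¹) * y⁻¹ := by group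
    _ = y * (y * z ^ (s*m + (t - m))) * y⁻¹ := by rw [hconjzy]
    _ = y * (y * z ^ (s*m + (t - m)) * y⁻¹) := by group
    _ = y * z ^ (s*(s*m + (t - m))) := by rw [h2]
  have h4s : (4:ℤ) ∣ (s - 1) := ⟨-((j:ℤ)+1), by rw [hs, hjz]; ring⟩
  -- core lemmas
  have coreH : ∀ (t : ℤ) (g : G), g * z ^ t * g⁻¹ ≠ y * z ^ (-1:ℤ) := by
    intro t g h
    rcases hdecomp g with ⟨m, rfl⟩ | ⟨m, rfl⟩
    · rw [hconjzz] at h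
      refine hyH (t + 1) ?_
      calc y = y * z ^ (-1:ℤ) * z ^ (1:ℤ) := by group
      _ = z ^ t * z ^ (1:ℤ) := by rw [← h]
      _ = z ^ (t + 1) := by rw [← zpow_add]
    · rw [hconjyz] at h
      refine hyH (s*t + 1) ?_
      calc y = y * z ^ (-1:ℤ) * z ^ (1:ℤ) := by group
      _ = z ^ (s*t) * z ^ (1:ℤ) := by rw [← h]
      _ = z ^ (s*t + 1) := by rw [← zpow_add]
  have coreY : ∀ a : ℤ, ¬ ((4:ℤ) ∣ (-1 - a)) →
      ∀ g : G, g * (y * z ^ a) * g⁻¹ ≠ y * z ^ (-1:ℤ) := by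
    intro a ha g h
    rcases hdecomp g with ⟨m, rfl⟩ | ⟨m, rfl⟩
    · rw [hconjzy] at h
      have hd := ycond _ _ h
      refine ha ?_
      have := dvd_add hd (h4s.mul_right m)
      have heq : -1 - (s*m + (a - m)) + (s - 1)*m = -1 - a := by ring
      rwa [heq] at this
    · rw [hconjyy] at h
      have hd := ycond _ _ h
      refine ha ?_
      have := dvd_add hd (h4s.mul_right (s*m + a))
      have heq : -1 - s*(s*m + (a - m)) + (s - 1)*(s*m + a) = -1 - a := by ring
      rwa [heq] at this
  -- powers of generators
  refine ⟨y * z ^ (-1:ℤ), ?_, ?_, ?_⟩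
  · intro k hc
    obtain ⟨g, hg⟩ := isConj_iff.mp hc
    rcases Nat.even_or_odd k with ⟨m, hm⟩ | ⟨m, hm⟩
    · have hxk : x ^ k = z ^ (0:ℤ) := by
        rw [hm, show m + m = 2*m by ring, pow_mul, hx, one_pow, zpow_zero]
      rw [hxk] at hg
      exact coreH 0 g hg
    · have hxk : x ^ k = y * z ^ (1:ℤ) := by
        rw [hm, pow_add, pow_mul, hx, one_pow, pow_one, one_mul, hxS]
      rw [hxk] at hg
      refine coreY 1 ?_ g hg
      omega
  · intro k hc
    obtain ⟨g, hg⟩ := isConj_iff.mp hc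
    have hyk : y ^ k = y ^ (k % 4) := by
      conv_lhs => rw [← Nat.div_add_mod k 4]
      rw [pow_add, pow_mul, hy, one_pow, one_mul]
    have hcases : k % 4 = 0 ∨ k % 4 = 1 ∨ k % 4 = 2 ∨ k % 4 = 3 := by omega
    rcases hcases with h | h | h | h <;> rw [h] at hyk
    · rw [hyk, pow_zero, show (1:G) = z ^ (0:ℤ) by rw [zpow_zero]] at hg
      exact coreH 0 g hg
    · rw [hyk, pow_one] at hg
      have hg' : g * (y * z ^ (0:ℤ)) * g⁻¹ = y * z ^ (-1:ℤ) := by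
        rw [zpow_zero, mul_one]; exact hg
      refine coreY 0 ?_ g hg'
      omega
    · rw [hyk, hy2] at hg
      exact coreH _ g hg
    · have h3 : y ^ 3 = y * z ^ (-(2*(n:ℤ))) := by
        rw [show (3:ℕ) = 1 + 2 by norm_num, pow_add, pow_one, hy2]
      rw [hyk, h3] at hg
      refine coreY (-(2*(n:ℤ))) ?_ g hg
      omega
  · intro k hc
    obtain ⟨g, hg⟩ := isConj_iff.mp hc
    rw [← zpow_natCast z k] at hg
    exact coreH (k : ℤ) g hg
end

section
/- Let g ≥ 3 be an odd integer and set n = g + 3 (so n is even). Let G be a finite group of order 8(g+3) generated by elements x, y, z with xyz = 1, where x has order 2, y has order 4, z has order n, and (xz³)² = 1. Then G is not a gpnf-group with respect to x, y, z: there exists an element of G that is not conjugate in G to any power of x, y, or z. -/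
/-!
Put `u = x z x`. The relations give `(z u)² = 1` and `u³ z³ = 1`, so `z³` commutes with `u` and
every element of `⟨z, u⟩` is `z ^ b` or `z ^ a * u * z ^ b` with `0 ≤ a < 3`. Graded by the parity
of the number of letters, these normal forms make up two sets `W₀`, `W₁` of at most `2n` elements
each, `n = ord z` being even. Hence `⟨z, u⟩ ⊆ W₀ ∪ W₁` and `⟨z x, z²⟩ = ⟨y, z²⟩ ⊆ W₀ ∪ x W₁` are
normal subgroups of order at most `4n < |G|`. The element `w = x z²` lies in neither, so it is not
conjugate to a power of `z` or of `y`; and `w² = 1` would force `x z x = z⁻¹`, making `G` dihedral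
of order at most `2n`, so `w` is not conjugate to a power of the involution `x` either.
-/

open Subgroup Pointwise

section

variable {G : Type*} [Group G]

theorem Subgroup.closure_subset_of_mul_mem [Finite G] {S T : Set G} (one : 1 ∈ T)
    (mul : ∀ s ∈ S, ∀ t ∈ T, s * t ∈ T) : (closure S : Set G) ⊆ T := by
  intro g hg
  rw [SetLike.mem_coe, ← mem_toSubmonoid, closure_toSubmonoid_of_finite] at hg
  induction hg using Submonoid.closure_induction_left with
  | one => exact one
  | mul_left s hs t _ ht => exact mul s hs t ht

theorem Subgroup.closure_normal_of_conj_mem [Finite G] {R S : Set G} (hR : closure R = ⊤)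
    (h : ∀ r ∈ R, ∀ s ∈ S, r * s * r⁻¹ ∈ closure S) : (closure S).Normal := by
  rw [← normalizer_eq_top_iff, eq_top_iff, ← hR, closure_le]
  intro r hr
  have hmap : (closure S).map (MulAut.conj r).toMonoidHom ≤ closure S := by
    rw [MonoidHom.map_closure, closure_le]
    rintro _ ⟨s, hs, rfl⟩
    exact h r hr s hs
  exact mem_normalizer_fintype fun g hg => hmap ⟨g, hg, rfl⟩

theorem Set.ncard_le_of_subset_iUnion_smul [Finite G] {ι : Type*} [Fintype ι] {S : Set G}
    (H : Subgroup G) (s : ι → G) (hS : S ⊆ ⋃ i, s i • (H : Set G)) :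
    S.ncard ≤ Fintype.card ι * Nat.card H := by
  calc S.ncard ≤ (⋃ i, s i • (H : Set G)).ncard := Set.ncard_le_ncard hS
    _ ≤ ∑ i, (s i • (H : Set G)).ncard := Set.ncard_iUnion_le_of_fintype _
    _ = Fintype.card ι * Nat.card H := by
      simp only [Set.ncard_smul_set, Finset.sum_const, Finset.card_univ, smul_eq_mul]
      rw [← Nat.card_coe_set_eq, SetLike.coe_sort_coe]

theorem Subgroup.card_le_ncard_of_closure_subset [Finite G] {S T : Set G} (hS : closure S = ⊤)
    (hT : (closure S : Set G) ⊆ T) : Nat.card G ≤ T.ncard := by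
  rw [hS, coe_top] at hT
  rw [← Set.ncard_univ]
  exact Set.ncard_le_ncard hT

theorem not_isConj_pow_of_mem_normal {N : Subgroup G} (hN : N.Normal) {a w : G} (ha : a ∈ N)
    (hw : w ∉ N) (k : ℕ) : ¬IsConj (a ^ k) w := by
  rw [isConj_iff]
  rintro ⟨c, rfl⟩
  exact hw (hN.conj_mem _ (pow_mem ha k) c)

theorem not_isConj_pow_of_sq_eq_one {a w : G} (ha : a ^ 2 = 1) (hw : w ^ 2 ≠ 1) (k : ℕ) :
    ¬IsConj (a ^ k) w := by
  rw [isConj_iff]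
  rintro ⟨c, rfl⟩
  rw [conj_pow, ← pow_mul, mul_comm, pow_mul, ha, one_pow, mul_one, mul_inv_cancel] at hw
  exact hw rfl

theorem zpow_mem_smul_zpowers_sq (z : G) {b p : ℤ} (h : b ≡ p [ZMOD 2]) :
    z ^ b ∈ z ^ (p % 2) • (zpowers (z ^ 2) : Set G) := by
  refine ⟨(z ^ 2) ^ ((b - p % 2) / 2), zpow_mem (mem_zpowers _) _, ?_⟩
  have hb : b = p % 2 + 2 * ((b - p % 2) / 2) := by rw [Int.ModEq] at h; omega
  show z ^ (p % 2) * (z ^ 2) ^ ((b - p % 2) / 2) = z ^ b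
  rw [← zpow_natCast, ← zpow_mul, ← zpow_add, Nat.cast_ofNat, ← hb]

/-- The normal forms `z ^ b` and `z ^ a * u * z ^ b` whose number of letters is `≡ p [ZMOD 2]`. -/
def parityWords (z u : G) (p : ℤ) : Set G :=
  {t | ∃ b : ℤ, b ≡ p [ZMOD 2] ∧ z ^ b = t} ∪
    {t | ∃ a b : ℤ, a + b + 1 ≡ p [ZMOD 2] ∧ z ^ a * u * z ^ b = t}

section parityWords

variable {z u t : G} {p : ℤ}

theorem one_mem_parityWords : (1 : G) ∈ parityWords z u 0 :=
  Or.inl ⟨0, rfl, zpow_zero z⟩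

theorem zpow_mul_mem_parityWords (ht : t ∈ parityWords z u p) (k : ℤ) :
    z ^ k * t ∈ parityWords z u (k + p) := by
  rcases ht with ⟨b, hb, rfl⟩ | ⟨a, b, hab, rfl⟩
  · exact Or.inl ⟨k + b, Int.ModEq.add_left k hb, by group⟩
  · refine Or.inr ⟨k + a, b, ?_, by group⟩
    rw [add_assoc, add_assoc]
    exact Int.ModEq.add_left k (by rwa [← add_assoc])

theorem mul_zpow_mem_parityWords (ht : t ∈ parityWords z u p) (k : ℤ) :
    t * z ^ k ∈ parityWords z u (p + k) := by
  rcases ht with ⟨b, hb, rfl⟩ | ⟨a, b, hab, rfl⟩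
  · exact Or.inl ⟨b + k, Int.ModEq.add_right k hb, by group⟩
  · refine Or.inr ⟨a, b + k, ?_, by group⟩
    rw [Int.ModEq] at hab ⊢; omega

theorem parityWords_congr {q : ℤ} (h : p ≡ q [ZMOD 2]) :
    parityWords z u p = parityWords z u q := by
  have key : ∀ c : ℤ, c ≡ p [ZMOD 2] ↔ c ≡ q [ZMOD 2] :=
    fun c => ⟨(·.trans h), (·.trans h.symm)⟩
  simp only [parityWords, key]

theorem parityWords_subset_union (p : ℤ) :
    parityWords z u p ⊆ parityWords z u 0 ∪ parityWords z u 1 := by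
  rcases Int.emod_two_eq p with h | h
  · exact (parityWords_congr (show p ≡ 0 [ZMOD 2] from h)).subset.trans Set.subset_union_left
  · exact (parityWords_congr (show p ≡ 1 [ZMOD 2] from h)).subset.trans Set.subset_union_right

theorem commute_zpow_three_mul (huz : u ^ 3 * z ^ 3 = 1) (q : ℤ) : Commute (z ^ (3 * q)) u := by
  have hz3 : z ^ 3 = (u ^ 3)⁻¹ := eq_inv_of_mul_eq_one_right huz
  rw [zpow_mul, zpow_ofNat, hz3]
  exact (((Commute.refl u).pow_left 3).inv_left).zpow_left q

theorem mul_zpow_mul_mem_parityWords (hzu : (z * u) ^ 2 = 1) (huz : u ^ 3 * z ^ 3 = 1)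
    (a : ℤ) : u * z ^ a * u ∈ parityWords z u a := by
  have hu3 : u ^ 3 = (z ^ 3)⁻¹ := eq_inv_of_mul_eq_one_left huz
  have hzuz : z * u * z = u⁻¹ := eq_inv_of_mul_eq_one_left (by rw [← hzu, sq]; group)
  have huzu : u * z * u = z⁻¹ := eq_inv_of_mul_eq_one_right (by rw [← hzu, sq]; group)
  obtain ⟨q, r, rfl, hr⟩ : ∃ q r : ℤ, a = 3 * q + r ∧ (r = 0 ∨ r = 1 ∨ r = 2) :=
    ⟨a / 3, a % 3, by omega, by omega⟩
  have hsplit : u * z ^ (3 * q + r) * u = z ^ (3 * q) * (u * z ^ r * u) := by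
    rw [zpow_add, ← mul_assoc u, ← (commute_zpow_three_mul huz q).eq]; group
  rw [hsplit]
  refine zpow_mul_mem_parityWords ?_ (3 * q)
  rcases hr with rfl | rfl | rfl
  · refine Or.inr ⟨-2, 1, by decide, ?_⟩
    calc z ^ (-2 : ℤ) * u * z ^ (1 : ℤ) = (z ^ 3)⁻¹ * (z * u * z) := by group
      _ = u * z ^ (0 : ℤ) * u := by rw [← hu3, hzuz, pow_succ, sq]; group
  · exact Or.inl ⟨-1, by decide, by rw [zpow_one, huzu, zpow_neg_one]⟩
  · refine Or.inr ⟨-1, 2, by decide, ?_⟩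
    calc z ^ (-1 : ℤ) * u * z ^ (2 : ℤ) = z⁻¹ * (u * (u ^ 3)⁻¹) * z⁻¹ := by rw [hu3]; group
      _ = z⁻¹ * ((z * u * z) * (z * u * z)) * z⁻¹ := by rw [hzuz]; group
      _ = u * z ^ (2 : ℤ) * u := by rw [zpow_two]; group

theorem mul_mem_parityWords (hzu : (z * u) ^ 2 = 1) (huz : u ^ 3 * z ^ 3 = 1)
    (ht : t ∈ parityWords z u p) : u * t ∈ parityWords z u (p + 1) := by
  rcases ht with ⟨b, hb, rfl⟩ | ⟨a, b, hab, rfl⟩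
  · refine Or.inr ⟨0, b, ?_, by group⟩
    rw [zero_add]; exact Int.ModEq.add_right 1 hb
  · have h := mul_zpow_mem_parityWords (mul_zpow_mul_mem_parityWords hzu huz a) b
    rw [parityWords_congr (show a + b ≡ p + 1 [ZMOD 2] by rw [Int.ModEq] at hab ⊢; omega)] at h
    simpa only [mul_assoc] using h

theorem closure_subset_parityWords [Finite G] (hzu : (z * u) ^ 2 = 1) (huz : u ^ 3 * z ^ 3 = 1) :
    (closure {z, u} : Set G) ⊆ parityWords z u 0 ∪ parityWords z u 1 := by
  refine closure_subset_of_mul_mem (Or.inl one_mem_parityWords) ?_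
  have hgraded : ∀ t ∈ parityWords z u 0 ∪ parityWords z u 1, ∃ p, t ∈ parityWords z u p :=
    fun t ht => ht.elim (⟨0, ·⟩) (⟨1, ·⟩)
  rintro s (rfl | rfl) t ht <;> obtain ⟨p, hp⟩ := hgraded t ht
  · exact parityWords_subset_union _ (by simpa using zpow_mul_mem_parityWords hp 1)
  · exact parityWords_subset_union _ (mul_mem_parityWords hzu huz hp)

theorem ncard_parityWords_le [Finite G] (huz : u ^ 3 * z ^ 3 = 1) (heven : Even (orderOf z))
    (p : ℤ) : (parityWords z u p).ncard ≤ 2 * orderOf z := by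
  set H := zpowers (z ^ 2)
  have hH : Nat.card H = orderOf z / 2 := by
    rw [Nat.card_zpowers, orderOf_pow_of_dvd two_ne_zero (even_iff_two_dvd.mp heven)]
  have hpow : {t | ∃ b : ℤ, b ≡ p [ZMOD 2] ∧ z ^ b = t} ⊆ z ^ (p % 2) • (H : Set G) := by
    rintro _ ⟨b, hb, rfl⟩
    exact zpow_mem_smul_zpowers_sq z hb
  have hmixed : {t | ∃ a b : ℤ, a + b + 1 ≡ p [ZMOD 2] ∧ z ^ a * u * z ^ b = t} ⊆
      ⋃ i : Fin 3, (z ^ ((i : ℕ) : ℤ) * u * z ^ ((p - i - 1) % 2)) • (H : Set G) := by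
    rintro _ ⟨a, b, hab, rfl⟩
    have hi : (((a % 3).toNat : ℕ) : ℤ) = a % 3 := Int.toNat_of_nonneg (by omega)
    refine Set.mem_iUnion.2 ⟨⟨(a % 3).toNat, by omega⟩, ?_⟩
    have hsplit : z ^ a * u * z ^ b = (z ^ (a % 3) * u) * z ^ (3 * (a / 3) + b) := by
      conv_lhs => rw [← Int.emod_add_mul_ediv a 3]
      rw [zpow_add, zpow_add, mul_assoc (z ^ (a % 3)), (commute_zpow_three_mul huz _).eq]
      group
    have hpar : 3 * (a / 3) + b ≡ p - (a % 3) - 1 [ZMOD 2] := by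
      rw [Int.ModEq] at hab ⊢; omega
    rw [hsplit, Fin.val_mk, hi, mul_smul]
    exact Set.smul_mem_smul_set (zpow_mem_smul_zpowers_sq z hpar)
  calc (parityWords z u p).ncard
      ≤ (z ^ (p % 2) • (H : Set G)).ncard + 3 * Nat.card H :=
        (Set.ncard_union_le _ _).trans (add_le_add (Set.ncard_le_ncard hpow)
          (by simpa using Set.ncard_le_of_subset_iUnion_smul H _ hmixed))
    _ = 2 * orderOf z := by
        rw [Set.ncard_smul_set, ← Nat.card_coe_set_eq, SetLike.coe_sort_coe, hH]
        obtain ⟨k, hk⟩ := heven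
        omega

end parityWords

section Involution

variable {x z : G}

theorem closure_conj_pair_normal [Finite G] (hgen : closure {x, z} = ⊤) (hx : x ^ 2 = 1) :
    (closure {z, x * z * x}).Normal := by
  have hxi : x⁻¹ = x := inv_eq_of_mul_eq_one_right (by rw [← sq, hx])
  have hz : z ∈ closure {z, x * z * x} := subset_closure (Set.mem_insert _ _)
  have hu : x * z * x ∈ closure {z, x * z * x} := subset_closure (Set.mem_insert_of_mem _ rfl)
  refine closure_normal_of_conj_mem hgen ?_
  simp only [Set.mem_insert_iff, Set.mem_singleton_iff, forall_eq_or_imp, forall_eq]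
  refine ⟨⟨?_, ?_⟩, ?_, ?_⟩
  · rwa [hxi]
  · rwa [show x * (x * z * x) * x⁻¹ = x ^ 2 * z by rw [sq]; group, hx, one_mul]
  · exact mul_mem (mul_mem hz hz) (inv_mem hz)
  · exact mul_mem (mul_mem hz hu) (inv_mem hz)

theorem closure_mul_sq_normal [Finite G] (hgen : closure {x, z} = ⊤) (hx : x ^ 2 = 1) :
    (closure {z * x, z ^ 2}).Normal := by
  have hxi : x⁻¹ = x := inv_eq_of_mul_eq_one_right (by rw [← sq, hx])
  have hzx : z * x ∈ closure {z * x, z ^ 2} := subset_closure (Set.mem_insert _ _)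
  have hz2 : z ^ 2 ∈ closure {z * x, z ^ 2} := subset_closure (Set.mem_insert_of_mem _ rfl)
  refine closure_normal_of_conj_mem hgen ?_
  simp only [Set.mem_insert_iff, Set.mem_singleton_iff, forall_eq_or_imp, forall_eq]
  refine ⟨⟨?_, ?_⟩, ?_, ?_⟩
  · rw [show x * (z * x) * x⁻¹ = (z * x⁻¹)⁻¹ * z ^ 2 by group, hxi]
    exact mul_mem (inv_mem hzx) hz2
  · rw [show x * z ^ 2 * x⁻¹ = (z * x⁻¹)⁻¹ * z ^ 2 * (z * x⁻¹) by group, hxi]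
    exact mul_mem (mul_mem (inv_mem hzx) hz2) hzx
  · rw [show z * (z * x) * z⁻¹ = z ^ 2 * (z * x⁻¹)⁻¹ by rw [sq]; group, hxi]
    exact mul_mem hz2 (inv_mem hzx)
  · rwa [show z * z ^ 2 * z⁻¹ = z ^ 2 by group]

theorem conj_pow_of_sq_eq_one (hx : x ^ 2 = 1) (k : ℕ) : (x * z * x) ^ k = x * z ^ k * x := by
  have hxi : x⁻¹ = x := inv_eq_of_mul_eq_one_right (by rw [← sq, hx])
  simpa only [hxi] using conj_pow (a := x) (b := z) (i := k)

theorem mul_conj_sq_eq_one (hzx : (z * x) ^ 4 = 1) : (z * (x * z * x)) ^ 2 = 1 := by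
  rw [← hzx]; simp only [pow_succ, pow_zero, one_mul, mul_assoc]

theorem conj_pow_three_mul_pow_three (hx : x ^ 2 = 1) (hxz : (x * z ^ 3) ^ 2 = 1) :
    (x * z * x) ^ 3 * z ^ 3 = 1 := by
  rw [conj_pow_of_sq_eq_one hx, ← hxz, sq, mul_assoc]

theorem closure_mul_sq_subset [Finite G] (hx : x ^ 2 = 1) (hzx : (z * x) ^ 4 = 1)
    (hxz : (x * z ^ 3) ^ 2 = 1) : (closure {z * x, z ^ 2} : Set G) ⊆
      parityWords z (x * z * x) 0 ∪ x • parityWords z (x * z * x) 1 := by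
  have hzu := mul_conj_sq_eq_one hzx
  have huz := conj_pow_three_mul_pow_three hx hxz
  have hxx : x * x = 1 := by rw [← sq, hx]
  have hzxu : z * x = x * (x * z * x) := by rw [← mul_assoc, ← mul_assoc, hxx, one_mul]
  refine closure_subset_of_mul_mem (Or.inl one_mem_parityWords) ?_
  simp only [Set.mem_insert_iff, Set.mem_singleton_iff, forall_eq_or_imp, forall_eq]
  constructor
  · rintro t (ht | ⟨t, ht, rfl⟩)
    · right
      rw [hzxu, mul_assoc x (x * z * x) t]
      exact ⟨_, by simpa only [zero_add] using mul_mem_parityWords hzu huz ht, rfl⟩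
    · left
      have h := zpow_mul_mem_parityWords ht 1
      rw [zpow_one, parityWords_congr (show (1 : ℤ) + 1 ≡ 0 [ZMOD 2] by decide)] at h
      simpa only [smul_eq_mul, mul_assoc, ← mul_assoc x x, hxx, one_mul] using h
  · rintro t (ht | ⟨t, ht, rfl⟩)
    · left
      have h := zpow_mul_mem_parityWords ht 2
      rwa [zpow_ofNat, parityWords_congr (show (2 : ℤ) + 0 ≡ 0 [ZMOD 2] by decide)] at h
    · right
      have h := mul_mem_parityWords hzu huz (mul_mem_parityWords hzu huz ht)
      rw [parityWords_congr (show (1 : ℤ) + 1 + 1 ≡ 1 [ZMOD 2] by decide)] at h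
      rw [show z ^ 2 * (x • t) = x * (x * z * x * (x * z * x * t)) by
        rw [smul_eq_mul, sq, mul_assoc, ← mul_assoc z x, hzxu, mul_assoc, ← mul_assoc z x, hzxu]
        group]
      exact ⟨_, h, rfl⟩

theorem card_le_two_mul_orderOf [Finite G] (hgen : closure {x, z} = ⊤) (hx : x ^ 2 = 1)
    (hxzx : x * z * x = z⁻¹) : Nat.card G ≤ 2 * orderOf z := by
  have hxx : x * x = 1 := by rw [← sq, hx]
  set C : Set G := (zpowers z : Set G)
  have hcover : (closure {x, z} : Set G) ⊆ C ∪ x • C := by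
    refine closure_subset_of_mul_mem (Or.inl (one_mem _)) ?_
    simp only [Set.mem_insert_iff, Set.mem_singleton_iff, forall_eq_or_imp, forall_eq]
    constructor
    · rintro t (ht | ⟨t, ht, rfl⟩)
      · exact Or.inr (Set.smul_mem_smul_set ht)
      · left
        simpa only [smul_eq_mul, ← mul_assoc, hxx, one_mul] using ht
    · rintro t (ht | ⟨t, ht, rfl⟩)
      · exact Or.inl (mul_mem (mem_zpowers z) ht)
      · right
        have h : z * (x * t) = x * (z⁻¹ * t) := by
          rw [← hxzx, ← mul_assoc, ← mul_assoc, ← mul_assoc, ← mul_assoc, hxx, one_mul]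
        simp only [smul_eq_mul, h]
        exact ⟨_, mul_mem (inv_mem (mem_zpowers z)) ht, rfl⟩
  calc Nat.card G ≤ (C ∪ x • C).ncard := card_le_ncard_of_closure_subset hgen hcover
    _ ≤ C.ncard + (x • C).ncard := Set.ncard_union_le _ _
    _ = 2 * orderOf z := by
      rw [Set.ncard_smul_set, ← two_mul, ← Nat.card_coe_set_eq, SetLike.coe_sort_coe,
        Nat.card_zpowers]

theorem mul_sq_not_mem_closure_conj_pair [Finite G] (hgen : closure {x, z} = ⊤)
    (hx : x ^ 2 = 1) (hzx : (z * x) ^ 4 = 1) (hxz : (x * z ^ 3) ^ 2 = 1)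
    (heven : Even (orderOf z)) (hcard : 4 * orderOf z < Nat.card G) :
    x * z ^ 2 ∉ closure {z, x * z * x} := by
  intro hw
  have hz : z ∈ closure {z, x * z * x} := subset_closure (Set.mem_insert _ _)
  have hx' : x ∈ closure {z, x * z * x} := by
    simpa using mul_mem hw (inv_mem (pow_mem hz 2))
  have htop : closure {z, x * z * x} = ⊤ :=
    eq_top_iff.2 (hgen ▸ (closure_le _).2 (Set.pair_subset hx' hz))
  have huz := conj_pow_three_mul_pow_three hx hxz
  have := card_le_ncard_of_closure_subset htop
    (closure_subset_parityWords (mul_conj_sq_eq_one hzx) huz)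
  have := Set.ncard_union_le (parityWords z (x * z * x) 0) (parityWords z (x * z * x) 1)
  have := ncard_parityWords_le huz heven 0
  have := ncard_parityWords_le huz heven 1
  omega

theorem mul_sq_not_mem_closure_mul_sq [Finite G] (hgen : closure {x, z} = ⊤)
    (hx : x ^ 2 = 1) (hzx : (z * x) ^ 4 = 1) (hxz : (x * z ^ 3) ^ 2 = 1)
    (heven : Even (orderOf z)) (hcard : 4 * orderOf z < Nat.card G) :
    x * z ^ 2 ∉ closure {z * x, z ^ 2} := by
  intro hw
  have hzx' : z * x ∈ closure {z * x, z ^ 2} := subset_closure (Set.mem_insert _ _)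
  have hz2 : z ^ 2 ∈ closure {z * x, z ^ 2} := subset_closure (Set.mem_insert_of_mem _ rfl)
  have hx' : x ∈ closure {z * x, z ^ 2} := by simpa using mul_mem hw (inv_mem hz2)
  have hz : z ∈ closure {z * x, z ^ 2} := by simpa using mul_mem hzx' (inv_mem hx')
  have htop : closure {z * x, z ^ 2} = ⊤ :=
    eq_top_iff.2 (hgen ▸ (closure_le _).2 (Set.pair_subset hx' hz))
  have huz := conj_pow_three_mul_pow_three hx hxz
  have := card_le_ncard_of_closure_subset htop (closure_mul_sq_subset hx hzx hxz)
  have := Set.ncard_union_le (parityWords z (x * z * x) 0) (x • parityWords z (x * z * x) 1)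
  rw [Set.ncard_smul_set] at this
  have := ncard_parityWords_le huz heven 0
  have := ncard_parityWords_le huz heven 1
  omega

theorem mul_sq_sq_ne_one [Finite G] (hgen : closure {x, z} = ⊤) (hx : x ^ 2 = 1)
    (hxz : (x * z ^ 3) ^ 2 = 1) (hcard : 2 * orderOf z < Nat.card G) :
    (x * z ^ 2) ^ 2 ≠ 1 := by
  intro h
  have hu3 := eq_inv_of_mul_eq_one_left (conj_pow_three_mul_pow_three hx hxz)
  have hu2 : (x * z * x) ^ 2 = (z ^ 2)⁻¹ := by
    refine eq_inv_of_mul_eq_one_left ?_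
    rw [conj_pow_of_sq_eq_one hx, ← h, sq (x * z ^ 2), mul_assoc]
  have hxzx : x * z * x = z⁻¹ :=
    calc x * z * x = (x * z * x) ^ 3 * ((x * z * x) ^ 2)⁻¹ := by group
      _ = z⁻¹ := by rw [hu3, hu2]; group
  exact absurd (card_le_two_mul_orderOf hgen hx hxzx) (by omega)

end Involution

end

theorem stmt_16_general (g : ℕ) (hodd : Odd g)
    {G : Type*} [Group G] [Fintype G] (hcard : Fintype.card G = 8 * (g + 3))
    (x y z : G)
    (hgen : Subgroup.closure ({x, y, z} : Set G) = ⊤)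
    (hprod : x * y * z = 1)
    (hx : orderOf x = 2) (hy : orderOf y = 4) (hz : orderOf z = g + 3)
    (hrel : (x * z ^ 3) ^ 2 = 1) :
    ∃ w : G, (∀ k : ℕ, ¬ IsConj (x ^ k) w) ∧ (∀ k : ℕ, ¬ IsConj (y ^ k) w) ∧
      (∀ k : ℕ, ¬ IsConj (z ^ k) w) := by
  have hx2 : x ^ 2 = 1 := hx ▸ pow_orderOf_eq_one x
  have hyzx : y = (z * x)⁻¹ := by
    rw [mul_inv_rev]; exact eq_inv_mul_of_mul_eq (eq_inv_of_mul_eq_one_left hprod)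
  have hzx : (z * x) ^ 4 = 1 := by
    rw [← inv_inj, ← inv_pow, ← hyzx, ← hy, pow_orderOf_eq_one, inv_one]
  have hgen' : closure {x, z} = ⊤ := by
    have hx' : x ∈ closure {x, z} := subset_closure (Set.mem_insert _ _)
    have hz' : z ∈ closure {x, z} := subset_closure (Set.mem_insert_of_mem _ rfl)
    refine eq_top_iff.2 (hgen ▸ (closure_le _).2 ?_)
    exact Set.insert_subset hx' (Set.pair_subset (hyzx ▸ inv_mem (mul_mem hz' hx')) hz')
  have heven : Even (orderOf z) := hz ▸ hodd.add_odd (by decide)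
  have hG : Nat.card G = 8 * orderOf z := by rw [Nat.card_eq_fintype_card, hcard, hz]
  have hpos := orderOf_pos z
  refine ⟨x * z ^ 2, not_isConj_pow_of_sq_eq_one hx2 (mul_sq_sq_ne_one hgen' hx2 hrel (by omega)),
    ?_, not_isConj_pow_of_mem_normal (closure_conj_pair_normal hgen' hx2)
      (subset_closure (Set.mem_insert _ _))
      (mul_sq_not_mem_closure_conj_pair hgen' hx2 hzx hrel heven (by omega))⟩
  exact hyzx ▸ not_isConj_pow_of_mem_normal (closure_mul_sq_normal hgen' hx2)
    (inv_mem (subset_closure (Set.mem_insert _ _)))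
    (mul_sq_not_mem_closure_mul_sq hgen' hx2 hzx hrel heven (by omega))

/-- Let `g ≥ 3` be odd, `n = g + 3` (even), and let `G` be a finite group of
order `8(g+3)` generated by `x, y, z` with `xyz = 1`, where `x`, `y`, `z` have orders
`2`, `4`, `n` respectively and `(x z³)² = 1`. Then `G` is not a gpnf-group with respect to
`x, y, z`: some element of `G` is not conjugate to any power of `x`, `y` or `z`. -/
theorem stmt_16 (g : ℕ) (hg : 3 ≤ g) (hodd : Odd g)
    {G : Type*} [Group G] [Fintype G] (hcard : Fintype.card G = 8 * (g + 3))
    (x y z : G)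
    (hgen : Subgroup.closure ({x, y, z} : Set G) = ⊤)
    (hprod : x * y * z = 1)
    (hx : orderOf x = 2) (hy : orderOf y = 4) (hz : orderOf z = g + 3)
    (hrel : (x * z ^ 3) ^ 2 = 1) :
    ∃ w : G, (∀ k : ℕ, ¬ IsConj (x ^ k) w) ∧ (∀ k : ℕ, ¬ IsConj (y ^ k) w) ∧
      (∀ k : ℕ, ¬ IsConj (z ^ k) w) :=
  stmt_16_general g hodd hcard x y z hgen hprod hx hy hz hrel
end

section
/- For every integer n ≥ 2 there exists a finite group G of order 4n (the dicyclic group of order 4n) together with elements x, y, z ∈ G of orders 4, 4, 2n respectively, such that x, y, z generate G, xyz = 1, x² = y², x² = zⁿ, and every element of G is conjugate in G to a power of x, y, or z. (In other words, for every n ≥ 2 there is a gpnf-group of type (4,4,2n) of order 4n.) -/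
open QuaternionGroup

section helpers
variable {n : ℕ} [NeZero n]

private lemma my_nz : NeZero (2 * n) := ⟨Nat.mul_ne_zero two_ne_zero (NeZero.ne n)⟩

private lemma my_conj_xa (u v : ZMod (2 * n)) (h : 2 ∣ (v - u).val) : IsConj (xa u) (xa v) := by
  haveI := @my_nz n _
  obtain ⟨i, hi⟩ := h
  rw [isConj_iff]
  refine ⟨a (-(i : ZMod (2 * n))), ?_⟩
  rw [mul_inv_eq_iff_eq_mul]
  simp only [a_mul_xa, xa_mul_a]
  congr 1
  have : ((v - u).val : ZMod (2 * n)) = v - u := ZMod.natCast_zmod_val _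
  rw [hi] at this
  push_cast at this
  linear_combination this

private lemma my_val_add_parity (j : ZMod (2 * n)) (m : ℕ) :
    (j + (m : ZMod (2 * n))).val % 2 = (j.val + m) % 2 := by
  haveI := @my_nz n _
  have h2 : (2 : ℕ) ∣ 2 * n := ⟨n, rfl⟩
  rw [ZMod.val_add, Nat.mod_mod_of_dvd _ h2, ZMod.val_natCast,
    Nat.add_mod, Nat.mod_mod_of_dvd _ h2, ← Nat.add_mod]

private lemma my_cube : (xa 0 : QuaternionGroup n) ^ 3 = xa (-(n : ZMod (2 * n))) := by
  rw [pow_succ, xa_sq, a_mul_xa, zero_sub]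
end helpers





/-- A witness that the dicyclic group of order `4n` is a gpnf-group of type `(4,4,2n)`,
with generators `x, y, z` satisfying `xyz = 1`, `x² = y²` and `x² = zⁿ`. -/
structure GpnfWitness44 (n : ℕ) where
  G : Type
  [grp : Group G]
  [fin : Fintype G]
  x : G
  y : G
  z : G
  card_eq : Fintype.card G = 4 * n
  dicyclic : Nonempty (G ≃* QuaternionGroup n)
  order_x : orderOf x = 4
  order_y : orderOf y = 4
  order_z : orderOf z = 2 * n
  gen : Subgroup.closure ({x, y, z} : Set G) = ⊤
  prod_eq : x * y * z = 1
  rel1 : x ^ 2 = y ^ 2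
  rel2 : x ^ 2 = z ^ n
  gpnf : ∀ g : G, (∃ k : ℕ, IsConj (x ^ k) g) ∨ (∃ k : ℕ, IsConj (y ^ k) g) ∨
    (∃ k : ℕ, IsConj (z ^ k) g)

/-- For every `n ≥ 2` there exists a finite group of order `4n` (the dicyclic
group of order `4n`) which is a gpnf-group of type `(4,4,2n)` with generators `x, y, z`
satisfying `xyz = 1`, `x² = y²` and `x² = zⁿ`. -/
theorem stmt_17 (n : ℕ) (hn : 2 ≤ n) : Nonempty (GpnfWitness44 n) := by
  haveI : NeZero n := ⟨by omega⟩
  haveI : NeZero (2 * n) := my_nz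
  set x : QuaternionGroup n := xa 0 with hx
  set y : QuaternionGroup n := xa (-1 - (n : ZMod (2 * n))) with hy
  set z : QuaternionGroup n := a 1 with hz
  -- prod_eq
  have prod_eq : x * y * z = 1 := by
    rw [hx, hy, hz, xa_mul_xa, a_mul_a, one_def]
    congr 1
    ring
  -- rel1, rel2
  have rel1 : x ^ 2 = y ^ 2 := by rw [hx, hy, xa_sq, xa_sq]
  have rel2 : x ^ 2 = z ^ n := by rw [hx, hz, xa_sq, a_one_pow]
  -- gen
  have gen : Subgroup.closure ({x, y, z} : Set (QuaternionGroup n)) = ⊤ := by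
    rw [Subgroup.eq_top_iff']
    intro g
    have hxm : x ∈ Subgroup.closure ({x, y, z} : Set (QuaternionGroup n)) :=
      Subgroup.subset_closure (by simp)
    have hzm : z ∈ Subgroup.closure ({x, y, z} : Set (QuaternionGroup n)) :=
      Subgroup.subset_closure (by simp)
    rcases g with j | j
    · have : a j = z ^ j.val := by rw [hz, a_one_pow, ZMod.natCast_zmod_val]
      rw [this]; exact pow_mem hzm _
    · have : xa j = x * z ^ j.val := by
        rw [hx, hz, a_one_pow, ZMod.natCast_zmod_val, xa_mul_a, zero_add]
      rw [this]; exact mul_mem hxm (pow_mem hzm _)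
  -- gpnf
  have gpnf : ∀ g : QuaternionGroup n, (∃ k : ℕ, IsConj (x ^ k) g) ∨
      (∃ k : ℕ, IsConj (y ^ k) g) ∨ (∃ k : ℕ, IsConj (z ^ k) g) := by
    intro g
    rcases g with j | j
    · right; right
      exact ⟨j.val, by rw [hz, a_one_pow, ZMod.natCast_zmod_val]⟩
    · rcases Nat.even_or_odd j.val with hj | hj
      · left
        refine ⟨1, ?_⟩
        rw [pow_one, hx]
        apply my_conj_xa
        rw [sub_zero]
        exact hj.two_dvd
      · rcases Nat.even_or_odd n with hne | hno
        · right; left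
          refine ⟨1, ?_⟩
          rw [pow_one, hy]
          apply my_conj_xa
          have : j - (-1 - (n : ZMod (2 * n))) = j + ((1 + n : ℕ) : ZMod (2 * n)) := by
            push_cast; ring
          rw [this]
          rw [Nat.dvd_iff_mod_eq_zero, my_val_add_parity]
          rw [Nat.odd_iff] at hj
          rw [Nat.even_iff] at hne
          omega
        · left
          refine ⟨3, ?_⟩
          rw [hx, my_cube]
          apply my_conj_xa
          have : j - (-(n : ZMod (2 * n))) = j + ((n : ℕ) : ZMod (2 * n)) := by
            push_cast; ring
          rw [this]
          rw [Nat.dvd_iff_mod_eq_zero, my_val_add_parity]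
          rw [Nat.odd_iff] at hj
          rw [Nat.odd_iff] at hno
          omega
  exact ⟨{
    G := QuaternionGroup n
    x := x, y := y, z := z
    card_eq := QuaternionGroup.card
    dicyclic := ⟨MulEquiv.refl _⟩
    order_x := by rw [hx]; exact orderOf_xa 0
    order_y := by rw [hy]; exact orderOf_xa _
    order_z := by rw [hz]; exact orderOf_a_one
    gen := gen
    prod_eq := prod_eq
    rel1 := rel1
    rel2 := rel2
    gpnf := gpnf }⟩
end

section
/- Let g ≥ 2 be an integer and let G be a finite group of order 8(g+1) generated by elements x, y satisfying x² = 1, y⁴ = 1, (xy)^{2(g+1)} = 1, and (xy²)² = 1. Then G is not a gpnf-group with respect to x, y, xy: there exists an element of G that is not conjugate in G to any power of x, of y, or of xy. -/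
private lemma aux_mod (Nv : ℕ) (h : 6 ≤ Nv) : (Nv - 1) * (Nv - 2) % Nv = 2 := by
  obtain ⟨M, rfl⟩ : ∃ M, Nv = M + 6 := ⟨Nv - 6, by omega⟩
  have e : (M + 6 - 1) * (M + 6 - 2) = (M + 6) * (M + 3) + 2 := by
    show (M + 5) * (M + 4) = (M + 6) * (M + 3) + 2
    ring
  rw [e, Nat.mul_add_mod, Nat.mod_eq_of_lt (by omega)]

/-- Let `g ≥ 2` and let `G` be the Accola–Maclachlan group: a finite group of
order `8(g+1)` generated by `x, y` with `x² = 1`, `y⁴ = 1`, `(xy)^{2(g+1)} = 1` and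
`(xy²)² = 1`. Then `G` is not a gpnf-group with respect to `x, y, xy`: some element of `G`
is not conjugate to any power of `x`, of `y`, or of `xy`. -/
theorem stmt_18 (g : ℕ) (hg : 2 ≤ g)
    {G : Type*} [Group G] [Fintype G] (hcard : Fintype.card G = 8 * (g + 1))
    (x y : G)
    (hgen : Subgroup.closure ({x, y} : Set G) = ⊤)
    (hx : x ^ 2 = 1) (hy : y ^ 4 = 1)
    (hxy : (x * y) ^ (2 * (g + 1)) = 1)
    (hrel : (x * y ^ 2) ^ 2 = 1) :
    ∃ w : G, (∀ k : ℕ, ¬ IsConj (x ^ k) w) ∧ (∀ k : ℕ, ¬ IsConj (y ^ k) w) ∧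
      (∀ k : ℕ, ¬ IsConj ((x * y) ^ k) w) := by
  set N := 2 * (g + 1) with hNdef
  have hN6 : 6 ≤ N := by omega
  haveI : NeZero N := ⟨by omega⟩
  set t := x * y with htdef
  set z := y ^ 2 with hzdef
  -- basic relations
  have hx2 : x * x = 1 := by rw [← pow_two]; exact hx
  have hxinv : x⁻¹ = x := inv_eq_of_mul_eq_one_right hx2
  have hz2' : z ^ 2 = 1 := by rw [hzdef, ← pow_mul]; exact hy
  have hz2 : z * z = 1 := by rw [← pow_two]; exact hz2'
  have hzinv : z⁻¹ = z := inv_eq_of_mul_eq_one_right hz2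
  have hxz : x * z = z * x := by
    have h2 : (x * z) * (x * z) = 1 := by rw [← pow_two]; exact hrel
    have h3 : (x * z)⁻¹ = x * z := inv_eq_of_mul_eq_one_right h2
    rw [mul_inv_rev, hxinv, hzinv] at h3
    exact h3.symm
  -- z is central
  have hzcom : ∀ u : G, Commute z u := by
    intro u
    have hu : u ∈ Subgroup.closure ({x, y} : Set G) := hgen ▸ Subgroup.mem_top u
    refine Subgroup.closure_induction (p := fun g _ => Commute z g) ?_ (Commute.one_right z)
      (fun a b _ _ ha hb => ha.mul_right hb) (fun a _ ha => ha.inv_right) hu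
    rintro a (rfl | rfl)
    · have hc : Commute a z := hxz
      exact hc.symm
    · show z * a = a * z
      rw [hzdef]
      exact pow_mul_comm' a 2
  -- generic induction principle over the group (inverses handled via finiteness)
  have hind : ∀ (p : G → Prop), p 1 → p x → p y →
      (∀ a b : G, p a → p b → p (a * b)) → ∀ u : G, p u := by
    intro p h1 hpx hpy hmul u
    have hpow : ∀ a : G, p a → ∀ k : ℕ, p (a ^ k) := by
      intro a ha k
      induction k with
      | zero => simpa using h1
      | succ m ih => rw [pow_succ]; exact hmul _ _ ih ha
    have hinv : ∀ a : G, p a → p a⁻¹ := by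
      intro a ha
      have hord : orderOf a ≠ 0 := (orderOf_pos a).ne'
      have hh : a⁻¹ = a ^ (orderOf a - 1) := by
        apply inv_eq_of_mul_eq_one_right
        rw [← pow_succ', show orderOf a - 1 + 1 = orderOf a by omega]
        exact pow_orderOf_eq_one a
      rw [hh]; exact hpow a ha _
    have hu : u ∈ Subgroup.closure ({x, y} : Set G) := hgen ▸ Subgroup.mem_top u
    refine Subgroup.closure_induction (p := fun g _ => p g) ?_ h1
      (fun a b _ _ ha hb => hmul a b ha hb) (fun a _ ha => hinv a ha) hu
    rintro a (rfl | rfl)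
    exacts [hpx, hpy]
  -- power reduction
  have hred : ∀ (u : G) (m : ℕ), u ^ m = 1 → ∀ k : ℕ, u ^ k = u ^ (k % m) := by
    intro u m hm k
    conv_lhs => rw [← Nat.div_add_mod k m]
    rw [pow_add, pow_mul, hm, one_pow, one_mul]
  have htinv : t⁻¹ = t ^ (N - 1) := by
    apply inv_eq_of_mul_eq_one_right
    rw [← pow_succ', show N - 1 + 1 = N by omega]
    exact hxy
  have hyx : y * x = t ^ (N - 1) * z := by
    rw [← htinv]
    have e1 : t⁻¹ * z = y⁻¹ * (x * z) := by rw [htdef, mul_inv_rev, hxinv, mul_assoc]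
    have e2 : y⁻¹ * (x * z) = y⁻¹ * (z * x) := by rw [hxz]
    have e3 : y⁻¹ * (z * x) = y * x := by rw [hzdef]; group
    rw [e1, e2, e3]
  have hyt1raw : y * t = t ^ (N - 1) * z * y := by
    calc y * t = (y * x) * y := by rw [htdef]; group
    _ = t ^ (N - 1) * z * y := by rw [hyx]
  have hyt1 : y * t = t ^ (N - 1) * z ^ 1 * y := by rw [pow_one]; exact hyt1raw
  have hxt1 : x * t * x⁻¹ = t ^ (N - 1) * z := by
    calc x * t * x⁻¹ = x * (x * y) * x := by rw [htdef, hxinv]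
    _ = y * x := by rw [show x * (x * y) * x = (x * x) * (y * x) from by group, hx2, one_mul]
    _ = t ^ (N - 1) * z := hyx
  have hyt1' : y * t * y⁻¹ = t ^ (N - 1) * z := by
    calc y * t * y⁻¹ = y * x := by rw [htdef]; group
    _ = t ^ (N - 1) * z := hyx
  have hcjpow : ∀ (u v : G) (k : ℕ), u * v ^ k * u⁻¹ = (u * v * u⁻¹) ^ k := by
    intro u v k
    induction k with
    | zero => simp
    | succ m ih => rw [pow_succ, pow_succ, ← ih]; group
  -- abelian-part multiplication
  have habel : ∀ a b a' b' : ℕ, (t ^ a * z ^ b) * (t ^ a' * z ^ b') = t ^ (a + a') * z ^ (b + b') := by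
    intro a b a' b'
    rw [mul_assoc, ← mul_assoc (z ^ b) (t ^ a') (z ^ b'), ((hzcom t).pow_pow b a').eq,
      mul_assoc, ← mul_assoc, ← pow_add, ← pow_add]
  have hyt : ∀ a : ℕ, y * t ^ a = t ^ ((N - 1) * a) * z ^ a * y := by
    intro a
    induction a with
    | zero => simp
    | succ m ih =>
      rw [pow_succ, ← mul_assoc, ih, mul_assoc, hyt1, ← mul_assoc, habel, ← Nat.mul_succ]
  have hyzt : ∀ a' b' : ℕ, y * (t ^ a' * z ^ b') = t ^ ((N - 1) * a') * z ^ (a' + b') * y := by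
    intro a' b'
    rw [← mul_assoc, hyt a', mul_assoc (t ^ ((N - 1) * a') * z ^ a') y (z ^ b'),
      ← ((hzcom y).pow_left b').eq, ← mul_assoc,
      mul_assoc (t ^ ((N - 1) * a')) (z ^ a') (z ^ b'), ← pow_add]
  have hmulC : ∀ a b a' b' : ℕ,
      (t ^ a * z ^ b * y) * (t ^ a' * z ^ b') = t ^ (a + (N - 1) * a') * z ^ (b + (a' + b')) * y := by
    intro a b a' b'
    rw [mul_assoc (t ^ a * z ^ b) y (t ^ a' * z ^ b'), hyzt a' b', ← mul_assoc, habel]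
  have hyy : y * y = z := by rw [hzdef]; exact (pow_two y).symm
  have hmulD : ∀ a b a' b' : ℕ,
      (t ^ a * z ^ b * y) * (t ^ a' * z ^ b' * y) = t ^ (a + (N - 1) * a') * z ^ (b + (a' + b') + 1) := by
    intro a b a' b'
    rw [← mul_assoc, hmulC, mul_assoc, hyy, mul_assoc, ← pow_succ]
  -- normal form
  have hxform : x = t * z * y := by
    have e : t * z * y = x * y ^ 4 := by rw [htdef, hzdef]; group
    rw [e, hy, mul_one]
  have hQ : ∀ u : G, ∃ a b : ℕ, u = t ^ a * z ^ b ∨ u = t ^ a * z ^ b * y := by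
    refine hind _ ⟨0, 0, Or.inl (by simp)⟩
      ⟨1, 1, Or.inr (by rw [pow_one, pow_one]; exact hxform)⟩
      ⟨0, 0, Or.inr (by simp)⟩ ?_
    intro u v hu hv
    rcases hu with ⟨a, b, hu | hu⟩ <;> rcases hv with ⟨a', b', hv | hv⟩
    · exact ⟨a + a', b + b', Or.inl (by rw [hu, hv, habel])⟩
    · exact ⟨a + a', b + b', Or.inr (by rw [hu, hv, ← mul_assoc, habel])⟩
    · exact ⟨a + (N - 1) * a', b + (a' + b'), Or.inr (by rw [hu, hv, hmulC])⟩
    · exact ⟨a + (N - 1) * a', b + (a' + b') + 1, Or.inl (by rw [hu, hv, hmulD])⟩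
  -- the normal form map is bijective
  have hbij : Function.Bijective
      (fun p : ZMod N × ZMod 2 × ZMod 2 => t ^ p.1.val * z ^ p.2.1.val * y ^ p.2.2.val) := by
    rw [Fintype.bijective_iff_surjective_and_card]
    constructor
    · intro u
      rcases hQ u with ⟨a, b, h | h⟩
      · refine ⟨(a, b, 0), ?_⟩
        show t ^ ((a : ZMod N)).val * z ^ ((b : ZMod 2)).val * y ^ ((0 : ZMod 2)).val = u
        rw [ZMod.val_natCast, ZMod.val_natCast, ZMod.val_zero, pow_zero, mul_one,
          ← hred t N hxy a, ← hred z 2 hz2' b]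
        exact h.symm
      · refine ⟨(a, b, 1), ?_⟩
        show t ^ ((a : ZMod N)).val * z ^ ((b : ZMod 2)).val * y ^ ((1 : ZMod 2)).val = u
        rw [ZMod.val_natCast, ZMod.val_natCast, show ((1 : ZMod 2)).val = 1 from rfl, pow_one,
          ← hred t N hxy a, ← hred z 2 hz2' b]
        exact h.symm
    · rw [hcard]
      simp only [Fintype.card_prod, ZMod.card]
      omega
  have hinj := hbij.injective
  -- distinctness of normal forms
  have hne : ∀ a b c a' b' c' : ℕ, c < 2 → c' < 2 →
      t ^ a * z ^ b * y ^ c = t ^ a' * z ^ b' * y ^ c' →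
      (a % N ≠ a' % N ∨ b % 2 ≠ b' % 2 ∨ c ≠ c') → False := by
    intro a b c a' b' c' hc hc' heq hdiff
    have hq : ((a : ZMod N), ((b : ZMod 2), (c : ZMod 2))) =
        ((a' : ZMod N), ((b' : ZMod 2), (c' : ZMod 2))) := by
      apply hinj
      show t ^ ((a : ZMod N)).val * z ^ ((b : ZMod 2)).val * y ^ ((c : ZMod 2)).val =
        t ^ ((a' : ZMod N)).val * z ^ ((b' : ZMod 2)).val * y ^ ((c' : ZMod 2)).val
      rw [ZMod.val_natCast, ZMod.val_natCast, ZMod.val_natCast, ZMod.val_natCast,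
        ZMod.val_natCast, ZMod.val_natCast, ← hred t N hxy a, ← hred z 2 hz2' b,
        Nat.mod_eq_of_lt hc, ← hred t N hxy a', ← hred z 2 hz2' b', Nat.mod_eq_of_lt hc']
      exact heq
    simp only [Prod.mk.injEq] at hq
    obtain ⟨h1, h2, h3⟩ := hq
    rcases hdiff with h | h | h
    · exact h ((ZMod.natCast_eq_natCast_iff' a a' N).mp h1)
    · exact h ((ZMod.natCast_eq_natCast_iff' b b' 2).mp h2)
    · have := (ZMod.natCast_eq_natCast_iff' c c' 2).mp h3
      omega
  have hneW : ∀ a b c : ℕ, c < 2 → (a % N ≠ 2 ∨ b % 2 ≠ 1 ∨ c ≠ 0) →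
      t ^ a * z ^ b * y ^ c = t ^ 2 * z → False := by
    intro a b c hc hd heq
    refine hne a b c 2 1 0 hc (by omega) ?_ ?_
    · rw [pow_one, pow_zero, mul_one]; exact heq
    · rcases hd with h | h | h
      · exact Or.inl (by rw [Nat.mod_eq_of_lt (show 2 < N by omega)]; exact h)
      · exact Or.inr (Or.inl (by omega))
      · exact Or.inr (Or.inr h)
  have hneW' : ∀ a b c : ℕ, c < 2 → (a % N ≠ N - 2 ∨ b % 2 ≠ 1 ∨ c ≠ 0) →
      t ^ a * z ^ b * y ^ c = t ^ (N - 2) * z → False := by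
    intro a b c hc hd heq
    refine hne a b c (N - 2) 1 0 hc (by omega) ?_ ?_
    · rw [pow_one, pow_zero, mul_one]; exact heq
    · rcases hd with h | h | h
      · exact Or.inl (by rw [Nat.mod_eq_of_lt (show N - 2 < N by omega)]; exact h)
      · exact Or.inr (Or.inl (by omega))
      · exact Or.inr (Or.inr h)
  -- conjugation behaviour of w = t^2 z and w' = t^(N-2) z
  have hgenconj : ∀ u : G, u * t * u⁻¹ = t ^ (N - 1) * z → u * z * u⁻¹ = z →
      (u * (t ^ 2 * z) * u⁻¹ = t ^ (N - 2) * z ∧ u * (t ^ (N - 2) * z) * u⁻¹ = t ^ 2 * z) := by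
    intro u h1 h2
    have hk : ∀ k : ℕ, u * (t ^ k * z) * u⁻¹ = t ^ ((N - 1) * k) * z ^ (k + 1) := by
      intro k
      have e1 : u * (t ^ k * z) * u⁻¹ = (u * t ^ k * u⁻¹) * (u * z * u⁻¹) := by group
      rw [e1, hcjpow u t k, h1, h2, (Commute.mul_pow ((hzcom (t ^ (N - 1))).symm) k),
        ← pow_mul, mul_assoc, ← pow_succ]
    constructor
    · rw [hk 2, hred t N hxy ((N - 1) * 2), hred z 2 hz2' (2 + 1),
        show (2 + 1) % 2 = 1 from by norm_num, pow_one,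
        show (N - 1) * 2 = N + (N - 2) from by omega, Nat.add_mod_left,
        Nat.mod_eq_of_lt (show N - 2 < N by omega)]
    · rw [hk (N - 2), hred t N hxy ((N - 1) * (N - 2)), hred z 2 hz2' (N - 2 + 1),
        show (N - 2 + 1) % 2 = 1 from by omega, pow_one, aux_mod N hN6]
  have hxzc : x * z * x⁻¹ = z := by
    rw [hxinv, hxz, mul_assoc, hx2, mul_one]
  have hyzc : y * z * y⁻¹ = z := by rw [hzdef]; group
  -- the conjugacy class of w is {w, w'}
  have hP : ∀ u : G,
      (u * (t ^ 2 * z) * u⁻¹ = t ^ 2 * z ∧ u * (t ^ (N - 2) * z) * u⁻¹ = t ^ (N - 2) * z) ∨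
      (u * (t ^ 2 * z) * u⁻¹ = t ^ (N - 2) * z ∧ u * (t ^ (N - 2) * z) * u⁻¹ = t ^ 2 * z) := by
    refine hind _ (Or.inl ⟨by simp, by simp⟩)
      (Or.inr (hgenconj x hxt1 hxzc)) (Or.inr (hgenconj y hyt1' hyzc)) ?_
    intro u v hu hv
    have e : ∀ wv : G, (u * v) * wv * (u * v)⁻¹ = u * (v * wv * v⁻¹) * u⁻¹ := fun wv => by group
    rcases hu with ⟨h1, h2⟩ | ⟨h1, h2⟩ <;> rcases hv with ⟨h3, h4⟩ | ⟨h3, h4⟩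
    · exact Or.inl ⟨by rw [e, h3, h1], by rw [e, h4, h2]⟩
    · exact Or.inr ⟨by rw [e, h3, h2], by rw [e, h4, h1]⟩
    · exact Or.inr ⟨by rw [e, h3, h1], by rw [e, h4, h2]⟩
    · exact Or.inl ⟨by rw [e, h3, h2], by rw [e, h4, h1]⟩
  have hkey : ∀ v : G, IsConj v (t ^ 2 * z) → v = t ^ 2 * z ∨ v = t ^ (N - 2) * z := by
    intro v hv
    obtain ⟨u, hu⟩ := isConj_iff.mp hv.symm
    rcases hP u with ⟨h1, _⟩ | ⟨h1, _⟩
    · left; rw [← hu, h1]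
    · right; rw [← hu, h1]
  refine ⟨t ^ 2 * z, ?_, ?_, ?_⟩
  · intro k hk
    have hxk : x ^ k = x ^ (k % 2) := hred x 2 hx k
    rcases hkey _ hk with h | h <;> rw [hxk] at h <;>
      rcases Nat.mod_two_eq_zero_or_one k with h2 | h2 <;> rw [h2] at h
    · exact hneW 0 0 0 (by omega) (Or.inr (Or.inl (by omega))) (by simpa using h)
    · exact hneW 1 1 1 (by omega) (Or.inr (Or.inr (by omega)))
        (by rw [pow_one, pow_one, pow_one, ← hxform]; simpa using h)
    · exact hneW' 0 0 0 (by omega) (Or.inr (Or.inl (by omega))) (by simpa using h)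
    · exact hneW' 1 1 1 (by omega) (Or.inr (Or.inr (by omega)))
        (by rw [pow_one, pow_one, pow_one, ← hxform]; simpa using h)
  · intro k hk
    have hyk : y ^ k = y ^ (k % 4) := hred y 4 hy k
    have h3 : y ^ 3 = z * y := by rw [hzdef]; group
    rcases hkey _ hk with h | h <;> rw [hyk] at h <;>
      rcases (show k % 4 = 0 ∨ k % 4 = 1 ∨ k % 4 = 2 ∨ k % 4 = 3 by omega)
        with h2 | h2 | h2 | h2 <;> rw [h2] at h
    · exact hneW 0 0 0 (by omega) (Or.inr (Or.inl (by omega))) (by simpa using h)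
    · exact hneW 0 0 1 (by omega) (Or.inr (Or.inr (by omega))) (by simpa using h)
    · exact hneW 0 1 0 (by omega) (Or.inl (by rw [Nat.zero_mod]; omega))
        (by simpa [hzdef] using h)
    · exact hneW 0 1 1 (by omega) (Or.inr (Or.inr (by omega)))
        (by simp only [pow_zero, one_mul, pow_one]; rw [← h3]; exact h)
    · exact hneW' 0 0 0 (by omega) (Or.inr (Or.inl (by omega))) (by simpa using h)
    · exact hneW' 0 0 1 (by omega) (Or.inr (Or.inr (by omega))) (by simpa using h)
    · exact hneW' 0 1 0 (by omega) (Or.inl (by rw [Nat.zero_mod]; omega))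
        (by simpa [hzdef] using h)
    · exact hneW' 0 1 1 (by omega) (Or.inr (Or.inr (by omega)))
        (by simp only [pow_zero, one_mul, pow_one]; rw [← h3]; exact h)
  · intro k hk
    rcases hkey _ hk with h | h
    · exact hneW k 0 0 (by omega) (Or.inr (Or.inl (by omega))) (by simpa using h)
    · exact hneW' k 0 0 (by omega) (Or.inr (Or.inl (by omega))) (by simpa using h)
end

section
/- Let g ≥ 3 be an integer with g ≡ 3 (mod 4) and let K be a finite group of order 8(g+1) generated by elements x, y satisfying x² = 1, y⁴ = 1, (xy)^{2(g+1)} = 1, and y²(xy)y²(xy)^g = 1. Then K is not a gpnf-group with respect to x, y, xy: there exists an element of K that is not conjugate in K to any power of x, of y, or of xy. -/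
/-!
The witness is `x y²`. Modulo the cyclic subgroup `N = ⟨[x, y]⟩` the images of `x` and `y`
commute, so conjugate elements have equal images in `K ⧸ N`, and `x, y, xy, xy²` map to
`x^i y^j` with `(i, j) = (1, 0), (0, 1), (1, 1), (1, 2)`. The relations make `N` normal with
`[x, y]^(g+1) = 1`, so `K ⧸ N` has at least `8` elements; since it is generated by commuting
elements of orders dividing `2` and `4`, it is `C₂ × C₄` with coordinates `(i mod 2, j mod 4)`,
and `(1, 2)` is not a multiple of `(1, 0)`, `(0, 1)` or `(1, 1)`.
-/

open Subgroup
open scoped commutatorElement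

section CommutingPair

variable {G : Type*} [Group G] {a b : G}

theorem exists_zpow_mul_zpow_eq_of_mem_closure_pair (hab : Commute a b) {v : G}
    (hv : v ∈ closure {a, b}) : ∃ i j : ℤ, a ^ i * b ^ j = v := by
  induction hv using closure_induction with
  | mem v hv =>
    rcases hv with rfl | rfl
    · exact ⟨1, 0, by simp⟩
    · exact ⟨0, 1, by simp⟩
  | one => exact ⟨0, 0, by simp⟩
  | mul v w _ _ hv hw =>
    obtain ⟨i, j, rfl⟩ := hv
    obtain ⟨k, l, rfl⟩ := hw
    refine ⟨i + k, j + l, ?_⟩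
    rw [zpow_add, zpow_add, mul_assoc, mul_assoc, ← mul_assoc (b ^ j),
      ← (hab.zpow_zpow k j).eq, mul_assoc]
  | inv v _ hv =>
    obtain ⟨i, j, rfl⟩ := hv
    refine ⟨-i, -j, ?_⟩
    rw [mul_inv_rev, zpow_neg, zpow_neg, ((hab.zpow_zpow i j).inv_inv).eq]

theorem commute_of_closure_pair_eq_top (hab : Commute a b) (hgen : closure {a, b} = ⊤)
    (v w : G) : Commute v w := by
  obtain ⟨i, j, rfl⟩ := exists_zpow_mul_zpow_eq_of_mem_closure_pair hab (hgen ▸ mem_top v)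
  obtain ⟨k, l, rfl⟩ := exists_zpow_mul_zpow_eq_of_mem_closure_pair hab (hgen ▸ mem_top w)
  exact ((Commute.zpow_zpow_self a i k).mul_right (hab.zpow_zpow i l)).mul_left
    ((hab.symm.zpow_zpow j k).mul_right (Commute.zpow_zpow_self b j l))

theorem modEq_of_zpow_mul_zpow_eq [Finite G] (hab : Commute a b) (hgen : closure {a, b} = ⊤)
    {p r : ℕ} [NeZero p] [NeZero r] (ha : a ^ p = 1) (hb : b ^ r = 1)
    (hcard : p * r ≤ Nat.card G) {i j i' j' : ℤ} (h : a ^ i * b ^ j = a ^ i' * b ^ j') :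
    i ≡ i' [ZMOD p] ∧ j ≡ j' [ZMOD r] := by
  let f : ZMod p × ZMod r → G := fun s ↦ a ^ s.1.val * b ^ s.2.val
  have hf (i j : ℤ) : f (i, j) = a ^ i * b ^ j := by
    simp only [f, ← zpow_natCast, ZMod.val_intCast, ← zpow_eq_zpow_emod' _ ha,
      ← zpow_eq_zpow_emod' _ hb]
  have hsurj : f.Surjective := fun v ↦ by
    obtain ⟨i, j, rfl⟩ := exists_zpow_mul_zpow_eq_of_mem_closure_pair hab (hgen ▸ mem_top v)
    exact ⟨(i, j), hf i j⟩
  have hinj : f.Injective := (hsurj.bijective_of_nat_card_le (by simpa using hcard)).injective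
  simpa [Prod.ext_iff, ZMod.intCast_eq_intCast_iff] using
    hinj ((hf i j).trans (h.trans (hf i' j').symm))

theorem eq_of_isConj_of_closure_pair_eq_top (hab : Commute a b) (hgen : closure {a, b} = ⊤)
    {v w : G} (h : IsConj v w) : v = w := by
  obtain ⟨c, hc⟩ := h
  exact mul_right_cancel ((commute_of_closure_pair_eq_top hab hgen v c).eq.trans hc)

end CommutingPair

section Quotient

variable {G : Type*} [Group G] {N : Subgroup G} [N.Normal] {a b : G}

theorem QuotientGroup.commute_mk_of_commutatorElement_mem (h : ⁅a, b⁆ ∈ N) :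
    Commute (a : G ⧸ N) b :=
  commutatorElement_eq_one_iff_commute.mp ((QuotientGroup.eq_one_iff _).mpr h)

theorem QuotientGroup.modEq_of_isConj [Finite G] (hgen : closure {a, b} = ⊤) (hN : ⁅a, b⁆ ∈ N)
    {p r : ℕ} [NeZero p] [NeZero r] (ha : a ^ p = 1) (hb : b ^ r = 1) (hindex : p * r ≤ N.index)
    {v w : G} (h : IsConj v w) {i j i' j' : ℤ}
    (hv : (v : G ⧸ N) = (a : G ⧸ N) ^ i * (b : G ⧸ N) ^ j)
    (hw : (w : G ⧸ N) = (a : G ⧸ N) ^ i' * (b : G ⧸ N) ^ j') :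
    i ≡ i' [ZMOD p] ∧ j ≡ j' [ZMOD r] := by
  have hab := commute_mk_of_commutatorElement_mem hN
  have hgenQ : closure {(a : G ⧸ N), (b : G ⧸ N)} = ⊤ := by
    rw [← Set.image_pair, ← QuotientGroup.coe_mk', ← MonoidHom.map_closure, hgen,
      map_top_of_surjective _ (QuotientGroup.mk'_surjective _)]
  refine modEq_of_zpow_mul_zpow_eq hab hgenQ (by rw [← QuotientGroup.mk_pow, ha]; rfl)
    (by rw [← QuotientGroup.mk_pow, hb]; rfl) (index_eq_card N ▸ hindex) ?_
  rw [← hv, ← hw]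
  exact eq_of_isConj_of_closure_pair_eq_top hab hgenQ ((QuotientGroup.mk' N).map_isConj h)

end Quotient

theorem Subgroup.normal_zpowers_of_conj_mem {G : Type*} [Group G] [Finite G] {s : Set G}
    (hs : closure s = ⊤) {c : G} (h : ∀ a ∈ s, a * c * a⁻¹ ∈ zpowers c) :
    (zpowers c).Normal := by
  rw [← normalizer_eq_top_iff, eq_top_iff, ← hs, closure_le]
  intro a ha
  rw [SetLike.mem_coe, mem_normalizer_iff_map_conj_eq]
  refine eq_of_le_of_card_ge ?_ (card_map_of_injective (MulAut.conj a).injective).ge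
  rw [MonoidHom.map_zpowers, zpowers_le]
  exact h a ha

theorem Subgroup.card_le_mul_index_zpowers {G : Type*} [Group G] {c : G} {n : ℕ}
    (hc : c ^ n = 1) (hn : n ≠ 0) : Nat.card G ≤ n * (zpowers c).index := by
  rw [← card_mul_index, Nat.card_zpowers]
  exact Nat.mul_le_mul_right _ (orderOf_le_of_pow_eq_one (Nat.pos_of_ne_zero hn) hc)

section Kulkarni

variable {K : Type*} [Group K] {x y : K} {g : ℕ}

theorem commutatorElement_eq_mul_sq_mul_sq (hx : x ^ 2 = 1) (hy : y ^ 4 = 1) :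
    ⁅x, y⁆ = (x * y) ^ 2 * y ^ 2 := by
  have hx' : x⁻¹ = x := inv_eq_of_mul_eq_one_right (by rw [← sq, hx])
  have hy' : y⁻¹ = y ^ 3 := inv_eq_of_mul_eq_one_right (by rw [← pow_succ', hy])
  rw [commutatorElement_def, hx', hy']
  simp only [pow_succ, pow_zero, one_mul, mul_assoc]

theorem conj_commutatorElement_left (hx : x ^ 2 = 1) : x * ⁅x, y⁆ * x⁻¹ = ⁅x, y⁆⁻¹ := by
  have hx' : x⁻¹ = x := inv_eq_of_mul_eq_one_right (by rw [← sq, hx])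
  have hxx (b : K) : x * (x * b) = b := by rw [← mul_assoc, ← sq, hx, one_mul]
  simp [commutatorElement_def, mul_assoc, hx', hxx]

theorem sq_mul_zpow_mul_sq (hy : y ^ 4 = 1) (hrel : y ^ 2 * (x * y) * y ^ 2 * (x * y) ^ g = 1)
    (n : ℤ) : y ^ 2 * (x * y) ^ n * y ^ 2 = (x * y) ^ (-(g : ℤ) * n) := by
  have hu : (y ^ 2)⁻¹ = y ^ 2 := inv_eq_of_mul_eq_one_right (by rw [← pow_add, hy])
  have h1 : y ^ 2 * (x * y) * (y ^ 2)⁻¹ = (x * y) ^ (-(g : ℤ)) := by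
    rw [hu, zpow_neg, zpow_natCast]
    exact eq_inv_of_mul_eq_one_left hrel
  rw [zpow_mul, ← h1, conj_zpow, hu]

variable (hx : x ^ 2 = 1) (hy : y ^ 4 = 1) (hxy : (x * y) ^ (2 * (g + 1)) = 1)
  (hrel : y ^ 2 * (x * y) * y ^ 2 * (x * y) ^ g = 1)
include hx hy hxy hrel

theorem commutatorElement_sq : ⁅x, y⁆ ^ 2 = (x * y) ^ 4 := by
  have hxy' : (x * y) ^ (2 * (g + 1) : ℤ) = 1 := by exact_mod_cast hxy
  have hconj := sq_mul_zpow_mul_sq hy hrel 2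
  rw [zpow_ofNat] at hconj
  calc ⁅x, y⁆ ^ 2 = (x * y) ^ 2 * (y ^ 2 * (x * y) ^ 2 * y ^ 2) := by
        rw [commutatorElement_eq_mul_sq_mul_sq hx hy, sq ((x * y) ^ 2 * y ^ 2)]
        simp only [mul_assoc]
    _ = (x * y) ^ (4 : ℤ) * ((x * y) ^ (2 * (g + 1) : ℤ))⁻¹ := by
        rw [hconj, ← zpow_ofNat, ← zpow_add, ← zpow_neg, ← zpow_add]; ring_nf
    _ = (x * y) ^ 4 := by rw [hxy', inv_one, mul_one, zpow_ofNat]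

theorem commutatorElement_pow_succ (hg : Odd g) : ⁅x, y⁆ ^ (g + 1) = 1 := by
  obtain ⟨k, rfl⟩ := hg
  rw [show 2 * k + 1 + 1 = 2 * (k + 1) by ring, pow_mul, commutatorElement_sq hx hy hxy hrel,
    ← pow_mul, ← hxy]
  ring_nf

theorem conj_commutatorElement_right {q : ℕ} (hg : g = 4 * q + 3) :
    y * ⁅x, y⁆ * y⁻¹ = ⁅x, y⁆ ^ (2 * q + 1) := by
  have hx' : x⁻¹ = x := inv_eq_of_mul_eq_one_right (by rw [← sq, hx])
  have hyz : y * (x * y) * y⁻¹ = y ^ 2 * (x * y)⁻¹ := by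
    rw [mul_inv_rev, hx']; group
  calc y * ⁅x, y⁆ * y⁻¹ = (y * (x * y) * y⁻¹) ^ 2 * y ^ 2 := by
        rw [commutatorElement_eq_mul_sq_mul_sq hx hy, conj_pow]; group
    _ = y ^ 2 * (x * y) ^ (-1 : ℤ) * y ^ 2 * (x * y) ^ (-1 : ℤ) * y ^ 2 := by
        rw [hyz, sq, zpow_neg_one]; simp only [mul_assoc]
    _ = (x * y) ^ ((4 * q + 2 : ℕ) : ℤ) * y ^ 2 := by
        rw [sq_mul_zpow_mul_sq hy hrel, ← zpow_add, hg]; push_cast; ring_nf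
    _ = ⁅x, y⁆ ^ (2 * q + 1) := by
        rw [zpow_natCast, pow_succ ⁅x, y⁆, pow_mul ⁅x, y⁆, commutatorElement_sq hx hy hxy hrel,
          commutatorElement_eq_mul_sq_mul_sq hx hy, ← mul_assoc, ← pow_mul, ← pow_add]

theorem zpowers_commutatorElement_normal [Finite K] (hgen : closure {x, y} = ⊤) {q : ℕ}
    (hg : g = 4 * q + 3) : (zpowers ⁅x, y⁆).Normal :=
  normal_zpowers_of_conj_mem hgen <| by
    rintro a (rfl | rfl)
    · rw [conj_commutatorElement_left hx]
      exact inv_mem (mem_zpowers _)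
    · rw [conj_commutatorElement_right hx hy hxy hrel hg]
      exact pow_mem (mem_zpowers _) _

theorem le_index_zpowers_commutatorElement (hcard : Nat.card K = 8 * (g + 1)) (hg : Odd g) :
    8 ≤ (zpowers ⁅x, y⁆).index := by
  have := card_le_mul_index_zpowers (commutatorElement_pow_succ hx hy hxy hrel hg) g.succ_ne_zero
  rw [hcard, mul_comm] at this
  exact Nat.le_of_mul_le_mul_left this g.succ_pos

end Kulkarni

theorem stmt_19_general (g : ℕ) (hmod : g % 4 = 3)
    {K : Type*} [Group K] [Fintype K] (hcard : Fintype.card K = 8 * (g + 1))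
    (x y : K)
    (hgen : Subgroup.closure ({x, y} : Set K) = ⊤)
    (hx : x ^ 2 = 1) (hy : y ^ 4 = 1)
    (hxy : (x * y) ^ (2 * (g + 1)) = 1)
    (hrel : y ^ 2 * (x * y) * y ^ 2 * (x * y) ^ g = 1) :
    ∃ w : K, (∀ k : ℕ, ¬ IsConj (x ^ k) w) ∧ (∀ k : ℕ, ¬ IsConj (y ^ k) w) ∧
      (∀ k : ℕ, ¬ IsConj ((x * y) ^ k) w) := by
  obtain ⟨q, rfl⟩ : ∃ q, g = 4 * q + 3 := ⟨g / 4, by omega⟩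
  have := zpowers_commutatorElement_normal hx hy hxy hrel hgen rfl
  have hindex := le_index_zpowers_commutatorElement hx hy hxy hrel
    (Nat.card_eq_fintype_card.trans hcard) ⟨2 * q + 1, by ring⟩
  have hab := QuotientGroup.commute_mk_of_commutatorElement_mem (mem_zpowers ⁅x, y⁆)
  have key {v : K} (i j : ℤ) (hv : (v : K ⧸ zpowers ⁅x, y⁆) = (x : K ⧸ _) ^ i * (y : K ⧸ _) ^ j)
      (h : IsConj v (x * y ^ 2)) : i ≡ 1 [ZMOD 2] ∧ j ≡ 2 [ZMOD 4] :=
    QuotientGroup.modEq_of_isConj hgen (mem_zpowers _) hx hy hindex h hv (by simp)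
  refine ⟨x * y ^ 2, fun k h ↦ ?_, fun k h ↦ ?_, fun k h ↦ ?_⟩
  · have := key k 0 (by simp) h
    simp [Int.ModEq] at this
  · have := key 0 k (by simp) h
    simp [Int.ModEq] at this
  · have := key k k (by simp [hab.mul_pow]) h
    simp only [Int.ModEq] at this
    omega

/-- Let `g ≥ 3` with `g ≡ 3 (mod 4)` and let `K` be Kulkarni's group: a finite
group of order `8(g+1)` generated by `x, y` with `x² = 1`, `y⁴ = 1`, `(xy)^{2(g+1)} = 1` and
`y²(xy)y²(xy)^g = 1`. Then `K` is not a gpnf-group with respect to `x, y, xy`: some element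
of `K` is not conjugate to any power of `x`, of `y`, or of `xy`. -/
theorem stmt_19 (g : ℕ) (hg : 3 ≤ g) (hmod : g % 4 = 3)
    {K : Type*} [Group K] [Fintype K] (hcard : Fintype.card K = 8 * (g + 1))
    (x y : K)
    (hgen : Subgroup.closure ({x, y} : Set K) = ⊤)
    (hx : x ^ 2 = 1) (hy : y ^ 4 = 1)
    (hxy : (x * y) ^ (2 * (g + 1)) = 1)
    (hrel : y ^ 2 * (x * y) * y ^ 2 * (x * y) ^ g = 1) :
    ∃ w : K, (∀ k : ℕ, ¬ IsConj (x ^ k) w) ∧ (∀ k : ℕ, ¬ IsConj (y ^ k) w) ∧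
      (∀ k : ℕ, ¬ IsConj ((x * y) ^ k) w) :=
  stmt_19_general g hmod hcard x y hgen hx hy hxy hrel
end
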